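/- arXiv:0904.0782 — 7 statements merged into one kernel-verified Lean document; each statement's English description precedes it below -/
import Mathlib

section
/- Suppose q ≥ 1 and a_q − 1 ∉ {a_1,…,a_{q−1}}. Then for any flow Γ' ∈ 𝓕_i(a_1,…,a_{q−1}, a_q − 1; b_1,…,b_q), there exists a unique pair (O, Γ) with O ∈ {L_1, L_2, L_3} and Γ ∈ 𝓕_i(a_1,…,a_q; b_1,…,b_q) such that O(Γ) is well-defined, is a flow, and equals Γ'. -/
open Finset

/-- A "flow graph" is a finite set of directed edges with integer vertices. -/
abbrev FlowGraph : Type := Finset (ℤ × ℤ)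

/-- The edges of `E` beginning at `r`. -/
def beginsAt (E : FlowGraph) (r : ℤ) : Finset (ℤ × ℤ) := E.filter (fun e => e.1 = r)

/-- The edges of `E` ending at `r`. -/
def endsAt (E : FlowGraph) (r : ℤ) : Finset (ℤ × ℤ) := E.filter (fun e => e.2 = r)

/-- `E` is a flow with set of sources `A` and set of sinks `B`:
every edge `(s,t)` has `s < t`; the sources and sinks are pairwise distinct;
exactly one edge begins at each source (and none ends there); exactly one edge
ends at each sink (and none begins there); and every other vertex either meets
no edge, or exactly one edge ends at it and exactly one edge begins at it
(such a vertex is a transit point). -/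
structure IsFlow (E : FlowGraph) (A B : Finset ℤ) : Prop where
  edge_lt : ∀ e ∈ E, e.1 < e.2
  disjAB : Disjoint A B
  source_out : ∀ a ∈ A, (beginsAt E a).card = 1
  source_in : ∀ a ∈ A, endsAt E a = ∅
  sink_in : ∀ b ∈ B, (endsAt E b).card = 1
  sink_out : ∀ b ∈ B, beginsAt E b = ∅
  transit : ∀ r : ℤ, r ∉ A → r ∉ B →
      (beginsAt E r = ∅ ∧ endsAt E r = ∅) ∨
      ((beginsAt E r).card = 1 ∧ (endsAt E r).card = 1)

/-- The set of transit points of the flow `E` with sources `A` and sinks `B`: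
the vertices meeting some edge which are neither sources nor sinks. -/
def transitSet (E : FlowGraph) (A B : Finset ℤ) : Finset ℤ :=
  ((E.image Prod.fst) ∪ (E.image Prod.snd)) \ (A ∪ B)

def IsTransitPoint (E : FlowGraph) (A B : Finset ℤ) (r : ℤ) : Prop :=
  r ∈ transitSet E A B

/-- Two vertices are linked if they lie in the same connected component of `E`. -/
def Linked (E : FlowGraph) (x y : ℤ) : Prop :=
  Relation.ReflTransGen (fun u v => (u, v) ∈ E ∨ (v, u) ∈ E) x y

/-- The finset of values of a family of integers. -/
def srcSet {q : ℕ} (a : Fin q → ℤ) : Finset ℤ := Finset.image a Finset.univ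

/-- Membership in `𝓕_i(a_1,…,a_q; b_1,…,b_q)` : a flow with sources the `a j`,
sinks the `b j`, and no transit point greater than `i`. -/
def InF {q : ℕ} (i : ℤ) (a b : Fin q → ℤ) (E : FlowGraph) : Prop :=
  IsFlow E (srcSet a) (srcSet b) ∧
  ∀ r : ℤ, IsTransitPoint E (srcSet a) (srcSet b) r → r ≤ i

/-- The three operations `L_1`, `L_2`, `L_3`. -/
inductive LOp : Type | L1 | L2 | L3

/-- Well-definedness conditions for the operations `L_1, L_2, L_3` on a flow with
sources `A`, sinks `B` and last source `c` (so `a_q = c`):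
`L_1` requires `c - 1` to be a transit point, `L_2` requires that no edge begins
at `c - 1`, and `L_3` requires that `c - 1` is not a source. -/
def LDefined (A B : Finset ℤ) (c : ℤ) (E : FlowGraph) : LOp → Prop
  | .L1 => IsTransitPoint E A B (c - 1)
  | .L2 => ∀ e ∈ E, e.1 ≠ c - 1
  | .L3 => c - 1 ∉ A

/-- The effect of the operations `L_1, L_2, L_3` (for last source `c`):
`L_1` replaces the edge `(s, c - 1)` by `(s, c)`, `L_2` adds the edge
`(c - 1, c)`, and `L_3` replaces the edge `(c, t)` by `(c - 1, t)`. -/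
def LApply (c : ℤ) (E : FlowGraph) : LOp → FlowGraph
  | .L1 => E.image (fun e => if e.2 = c - 1 then (e.1, c) else e)
  | .L2 => insert (c - 1, c) E
  | .L3 => E.image (fun e => if e.1 = c then (c - 1, e.2) else e)

/-- A graph is a flow if it is a flow for some choice of sources and sinks. -/
def IsFlowGraph (E : FlowGraph) : Prop := ∃ A B : Finset ℤ, IsFlow E A B

namespace Cor19

lemma mem_beginsAt {E : FlowGraph} {r : ℤ} {e : ℤ × ℤ} :
    e ∈ beginsAt E r ↔ e ∈ E ∧ e.1 = r := by simp [beginsAt]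

lemma mem_endsAt {E : FlowGraph} {r : ℤ} {e : ℤ × ℤ} :
    e ∈ endsAt E r ↔ e ∈ E ∧ e.2 = r := by simp [endsAt]

lemma beginsAt_insert (E : FlowGraph) (e : ℤ × ℤ) (r : ℤ) :
    beginsAt (insert e E) r =
      if e.1 = r then insert e (beginsAt E r) else beginsAt E r := by
  simp [beginsAt, Finset.filter_insert]

lemma endsAt_insert (E : FlowGraph) (e : ℤ × ℤ) (r : ℤ) :
    endsAt (insert e E) r =
      if e.2 = r then insert e (endsAt E r) else endsAt E r := by
  simp [endsAt, Finset.filter_insert]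

lemma beginsAt_erase (E : FlowGraph) (e : ℤ × ℤ) (r : ℤ) :
    beginsAt (E.erase e) r = (beginsAt E r).erase e := by
  simp [beginsAt, Finset.filter_erase]

lemma endsAt_erase (E : FlowGraph) (e : ℤ × ℤ) (r : ℤ) :
    endsAt (E.erase e) r = (endsAt E r).erase e := by
  simp [endsAt, Finset.filter_erase]

lemma eq_singleton_of_card_one {s : Finset (ℤ × ℤ)} {x : ℤ × ℤ}
    (h : s.card = 1) (hx : x ∈ s) : s = {x} := by
  obtain ⟨y, hy⟩ := Finset.card_eq_one.mp h
  subst hy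
  have : x = y := by simpa using hx
  rw [this]

lemma mem_transitSet {E : FlowGraph} {A B : Finset ℤ} {r : ℤ} :
    r ∈ transitSet E A B ↔ (∃ e ∈ E, e.1 = r ∨ e.2 = r) ∧ r ∉ A ∧ r ∉ B := by
  simp only [transitSet, Finset.mem_sdiff, Finset.mem_union, Finset.mem_image]
  constructor
  · rintro ⟨h1, h2⟩
    refine ⟨?_, by tauto⟩
    rcases h1 with ⟨e, he, hr⟩ | ⟨e, he, hr⟩
    · exact ⟨e, he, Or.inl hr⟩
    · exact ⟨e, he, Or.inr hr⟩
  · rintro ⟨⟨e, he, hr | hr⟩, h2, h3⟩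
    · exact ⟨Or.inl ⟨e, he, hr⟩, by tauto⟩
    · exact ⟨Or.inr ⟨e, he, hr⟩, by tauto⟩

end Cor19

namespace Cor19

/-- Inverse of `L1`. -/
def g1 (c : ℤ) (e : ℤ × ℤ) : ℤ × ℤ := if e.2 = c then (e.1, c - 1) else e

/-- Inverse of `L3`. -/
def g3 (c : ℤ) (e : ℤ × ℤ) : ℤ × ℤ := if e.1 = c - 1 then (c, e.2) else e

lemma bridge1 (c : ℤ) {E' : FlowGraph} {s₀ : ℤ}
    (hend : endsAt E' c = {(s₀, c)}) :
    E'.image (g1 c) = insert (s₀, c - 1) (E'.erase (s₀, c)) := by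
  have hs₀ : (s₀, c) ∈ E' := by
    have h : (s₀, c) ∈ endsAt E' c := by rw [hend]; exact Finset.mem_singleton_self _
    exact (mem_endsAt.mp h).1
  have huniq : ∀ e ∈ E', e.2 = c → e = (s₀, c) := by
    intro e he h2
    have h : e ∈ endsAt E' c := mem_endsAt.mpr ⟨he, h2⟩
    rwa [hend, Finset.mem_singleton] at h
  ext e
  simp only [Finset.mem_image, Finset.mem_insert, Finset.mem_erase]
  constructor
  · rintro ⟨x, hx, rfl⟩
    by_cases h : x.2 = c
    · have hxe := huniq x hx h; subst hxe; left; simp [g1]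
    · right
      simp only [g1, h, if_neg, ite_false]
      exact ⟨fun hxe => h (by rw [hxe]), hx⟩
  · rintro (rfl | ⟨hne, he⟩)
    · exact ⟨(s₀, c), hs₀, by simp [g1]⟩
    · refine ⟨e, he, ?_⟩
      have h2 : e.2 ≠ c := fun h => hne (huniq e he h)
      simp [g1, h2]

lemma bridge3 (c : ℤ) {E' : FlowGraph} {t₀ : ℤ}
    (hbeg : beginsAt E' (c - 1) = {(c - 1, t₀)}) :
    E'.image (g3 c) = insert (c, t₀) (E'.erase (c - 1, t₀)) := by
  have ht₀ : (c - 1, t₀) ∈ E' := by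
    have h : (c - 1, t₀) ∈ beginsAt E' (c - 1) := by
      rw [hbeg]; exact Finset.mem_singleton_self _
    exact (mem_beginsAt.mp h).1
  have huniq : ∀ e ∈ E', e.1 = c - 1 → e = (c - 1, t₀) := by
    intro e he h1
    have h : e ∈ beginsAt E' (c - 1) := mem_beginsAt.mpr ⟨he, h1⟩
    rwa [hbeg, Finset.mem_singleton] at h
  ext e
  simp only [Finset.mem_image, Finset.mem_insert, Finset.mem_erase]
  constructor
  · rintro ⟨x, hx, rfl⟩
    by_cases h : x.1 = c - 1
    · have hxe := huniq x hx h; subst hxe; left; simp [g3]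
    · right
      simp only [g3, h, ite_false]
      exact ⟨fun hxe => h (by rw [hxe]), hx⟩
  · rintro (rfl | ⟨hne, he⟩)
    · exact ⟨(c - 1, t₀), ht₀, by simp [g3]⟩
    · refine ⟨e, he, ?_⟩
      have h1 : e.1 ≠ c - 1 := fun h => hne (huniq e he h)
      simp [g3, h1]

lemma endsAt_c_empty {Γ : FlowGraph} {A B : Finset ℤ} {c : ℤ}
    (hflow : IsFlow Γ A B) (hcA : c ∈ A) : endsAt Γ c = ∅ :=
  hflow.source_in c hcA

lemma shapeL2 {c : ℤ} {A B : Finset ℤ} {Γ E' : FlowGraph}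
    (hflow : IsFlow Γ A B) (hcA : c ∈ A)
    (heq : LApply c Γ .L2 = E') : Γ = E'.erase (c - 1, c) := by
  have hnot : (c - 1, c) ∉ Γ := by
    intro h
    have : (c - 1, c) ∈ endsAt Γ c := mem_endsAt.mpr ⟨h, rfl⟩
    rw [endsAt_c_empty hflow hcA] at this
    exact absurd this (Finset.notMem_empty _)
  rw [← heq]
  show Γ = (insert (c - 1, c) Γ).erase (c - 1, c)
  rw [Finset.erase_insert hnot]

lemma shapeL1 {c : ℤ} {A B : Finset ℤ} {Γ E' : FlowGraph}
    (hflow : IsFlow Γ A B) (hcA : c ∈ A)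
    (heq : LApply c Γ .L1 = E') : Γ = E'.image (g1 c) := by
  rw [← heq]
  show Γ = (Γ.image fun e => if e.2 = c - 1 then (e.1, c) else e).image (g1 c)
  rw [Finset.image_image]
  have : ∀ e ∈ Γ, (g1 c ∘ fun e : ℤ × ℤ => if e.2 = c - 1 then (e.1, c) else e) e = id e := by
    intro e he
    by_cases h : e.2 = c - 1
    · simp only [Function.comp, h, ite_true, g1, if_pos rfl, id]
      exact Prod.ext rfl h.symm
    · have h2 : e.2 ≠ c := by
        intro hc
        have : e ∈ endsAt Γ c := mem_endsAt.mpr ⟨he, hc⟩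
        rw [endsAt_c_empty hflow hcA] at this
        exact absurd this (Finset.notMem_empty _)
      simp [Function.comp, h, g1, h2]
  rw [Finset.image_congr this, Finset.image_id]

lemma beginsAt_c1_empty {c : ℤ} {A B : Finset ℤ} {Γ E' : FlowGraph}
    (hflow : IsFlow Γ A B) (hc1A : c - 1 ∉ A) (hc1B : c - 1 ∉ B)
    (hE'c1 : endsAt E' (c - 1) = ∅)
    (heq : LApply c Γ .L3 = E') : beginsAt Γ (c - 1) = ∅ := by
  have hends : endsAt Γ (c - 1) = ∅ := by
    rw [Finset.eq_empty_iff_forall_notMem]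
    intro e hmem
    obtain ⟨he, h2⟩ := mem_endsAt.mp hmem
    have h1 : e.1 ≠ c := by
      have := hflow.edge_lt e he; omega
    have : e ∈ E' := by
      rw [← heq]
      exact Finset.mem_image.mpr ⟨e, he, by simp [h1]⟩
    have : e ∈ endsAt E' (c - 1) := mem_endsAt.mpr ⟨this, h2⟩
    rw [hE'c1] at this
    exact absurd this (Finset.notMem_empty _)
  rcases hflow.transit (c - 1) hc1A hc1B with ⟨hb, _⟩ | ⟨_, he1⟩
  · exact hb
  · rw [hends] at he1; simp at he1

lemma shapeL3 {c : ℤ} {A B : Finset ℤ} {Γ E' : FlowGraph}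
    (hflow : IsFlow Γ A B) (hc1A : c - 1 ∉ A) (hc1B : c - 1 ∉ B)
    (hE'c1 : endsAt E' (c - 1) = ∅)
    (heq : LApply c Γ .L3 = E') : Γ = E'.image (g3 c) := by
  have hbeg := beginsAt_c1_empty hflow hc1A hc1B hE'c1 heq
  rw [← heq]
  show Γ = (Γ.image fun e => if e.1 = c then (c - 1, e.2) else e).image (g3 c)
  rw [Finset.image_image]
  have : ∀ e ∈ Γ, (g3 c ∘ fun e : ℤ × ℤ => if e.1 = c then (c - 1, e.2) else e) e = id e := by
    intro e he
    by_cases h : e.1 = c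
    · simp only [Function.comp, h, ite_true, g3, if_pos rfl, id]
      exact Prod.ext h.symm rfl
    · have h1 : e.1 ≠ c - 1 := by
        intro hc
        have : e ∈ beginsAt Γ (c - 1) := mem_beginsAt.mpr ⟨he, hc⟩
        rw [hbeg] at this
        exact absurd this (Finset.notMem_empty _)
      simp [Function.comp, h, g3, h1]
  rw [Finset.image_congr this, Finset.image_id]

lemma sigL1 {c : ℤ} {A B : Finset ℤ} {Γ E' : FlowGraph}
    (hflow : IsFlow Γ A B) (hcA : c ∈ A)
    (hdef : LDefined A B c Γ .L1)
    (heq : LApply c Γ .L1 = E') :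
    (c - 1, c) ∉ E' ∧ (endsAt E' c).Nonempty := by
  constructor
  · intro hmem
    rw [← heq] at hmem
    obtain ⟨x, hx, hgx⟩ := Finset.mem_image.mp hmem
    by_cases h : x.2 = c - 1
    · rw [if_pos h] at hgx
      have hx1 : x.1 = c - 1 := congrArg Prod.fst hgx
      have := hflow.edge_lt x hx
      omega
    · rw [if_neg h] at hgx
      subst hgx
      have hxx : (c - 1, c) ∈ endsAt Γ c := mem_endsAt.mpr ⟨hx, rfl⟩
      rw [endsAt_c_empty hflow hcA] at hxx
      exact absurd hxx (Finset.notMem_empty _)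
  · have htr : IsTransitPoint Γ A B (c - 1) := hdef
    obtain ⟨⟨e, hmem, hor⟩, hnA, hnB⟩ := mem_transitSet.mp htr
    have hcards : (endsAt Γ (c - 1)).card = 1 := by
      rcases hflow.transit (c - 1) hnA hnB with ⟨hb, he⟩ | ⟨_, he⟩
      · exfalso
        rcases hor with h | h
        · have hx : e ∈ beginsAt Γ (c - 1) := mem_beginsAt.mpr ⟨hmem, h⟩
          rw [hb] at hx; exact absurd hx (Finset.notMem_empty _)
        · have hx : e ∈ endsAt Γ (c - 1) := mem_endsAt.mpr ⟨hmem, h⟩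
          rw [he] at hx; exact absurd hx (Finset.notMem_empty _)
      · exact he
    obtain ⟨e', hee⟩ := Finset.card_pos.mp (by omega : 0 < (endsAt Γ (c - 1)).card)
    obtain ⟨heΓ, he2⟩ := mem_endsAt.mp hee
    refine ⟨(e'.1, c), mem_endsAt.mpr ⟨?_, rfl⟩⟩
    rw [← heq]
    exact Finset.mem_image.mpr ⟨e', heΓ, by simp [he2]⟩

lemma sigL3 {c : ℤ} {A B : Finset ℤ} {Γ E' : FlowGraph}
    (hflow : IsFlow Γ A B) (hcA : c ∈ A)
    (heq : LApply c Γ .L3 = E') :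
    endsAt E' c = ∅ := by
  rw [Finset.eq_empty_iff_forall_notMem]
  intro e hmem
  obtain ⟨he, h2⟩ := mem_endsAt.mp hmem
  rw [← heq] at he
  obtain ⟨x, hx, hgx⟩ := Finset.mem_image.mp he
  have hx2 : x.2 = c := by
    by_cases h : x.1 = c
    · rw [if_pos h] at hgx; rw [← hgx] at h2; exact h2
    · rw [if_neg h] at hgx; rw [← hgx] at h2; exact h2
  have : x ∈ endsAt Γ c := mem_endsAt.mpr ⟨hx, hx2⟩
  rw [endsAt_c_empty hflow hcA] at this
  exact absurd this (Finset.notMem_empty _)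

end Cor19

namespace Cor19

lemma existL2 {i c : ℤ} {A A' B : Finset ℤ} {E' : FlowGraph}
    (hcA : c ∈ A) (hc1A : c - 1 ∉ A)
    (hA' : ∀ r, r ∈ A' ↔ (r = c - 1 ∨ (r ∈ A ∧ r ≠ c)))
    (hAi : ∀ x ∈ A, x ≤ i) (hBi : ∀ x ∈ B, i < x)
    (hflow' : IsFlow E' A' B)
    (htr' : ∀ r, IsTransitPoint E' A' B r → r ≤ i)
    (hmem : (c - 1, c) ∈ E') :
    (IsFlow (E'.erase (c - 1, c)) A B ∧
      ∀ r, IsTransitPoint (E'.erase (c - 1, c)) A B r → r ≤ i) ∧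
    LDefined A B c (E'.erase (c - 1, c)) .L2 ∧
    IsFlowGraph (LApply c (E'.erase (c - 1, c)) .L2) ∧
    LApply c (E'.erase (c - 1, c)) .L2 = E' := by
  have hc1A' : c - 1 ∈ A' := (hA' _).mpr (Or.inl rfl)
  have hcA' : c ∉ A' := by
    intro h; rcases (hA' c).mp h with h | ⟨_, h⟩
    · omega
    · exact h rfl
  have hci : c ≤ i := hAi c hcA
  have hcB : c ∉ B := fun h => absurd (hBi c h) (by omega)
  have hc1B : c - 1 ∉ B := fun h => absurd (hBi _ h) (by omega)
  have notA' : ∀ r, r ∉ A → r ≠ c - 1 → r ∉ A' := by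
    intro r h h1 hm
    rcases (hA' r).mp hm with h2 | ⟨h2, _⟩
    · exact h1 h2
    · exact h h2
  have hendc : endsAt E' c = {(c - 1, c)} := by
    have hm : (c - 1, c) ∈ endsAt E' c := mem_endsAt.mpr ⟨hmem, rfl⟩
    rcases hflow'.transit c hcA' hcB with ⟨_, he⟩ | ⟨_, he⟩
    · rw [he] at hm; exact absurd hm (Finset.notMem_empty _)
    · exact eq_singleton_of_card_one he hm
  have hbegc : (beginsAt E' c).card = 1 := by
    have hm : (c - 1, c) ∈ endsAt E' c := mem_endsAt.mpr ⟨hmem, rfl⟩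
    rcases hflow'.transit c hcA' hcB with ⟨_, he⟩ | ⟨hb, _⟩
    · rw [he] at hm; exact absurd hm (Finset.notMem_empty _)
    · exact hb
  have hbegc1 : beginsAt E' (c - 1) = {(c - 1, c)} :=
    eq_singleton_of_card_one (hflow'.source_out _ hc1A') (mem_beginsAt.mpr ⟨hmem, rfl⟩)
  have heq : LApply c (E'.erase (c - 1, c)) .L2 = E' := Finset.insert_erase hmem
  refine ⟨⟨⟨?_, ?_, ?_, ?_, ?_, ?_, ?_⟩, ?_⟩, ?_, ?_, heq⟩
  · -- edge_lt
    intro e he; exact hflow'.edge_lt e (Finset.mem_of_mem_erase he)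
  · -- disjAB
    rw [Finset.disjoint_left]
    intro x hx hy
    have := hAi x hx; have := hBi x hy; omega
  · -- source_out
    intro x hx
    rw [beginsAt_erase]
    rcases (em (x = c)) with rfl | hxc
    · rw [Finset.erase_eq_of_notMem (by
        intro hm; exact absurd (mem_beginsAt.mp hm).2 (by omega))]
      exact hbegc
    · have hxA' : x ∈ A' := (hA' x).mpr (Or.inr ⟨hx, hxc⟩)
      have hx1 : x ≠ c - 1 := fun h => hc1A (h ▸ hx)
      rw [Finset.erase_eq_of_notMem (by
        intro hm; exact hx1 (mem_beginsAt.mp hm).2.symm)]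
      exact hflow'.source_out x hxA'
  · -- source_in
    intro x hx
    rw [endsAt_erase]
    rcases (em (x = c)) with rfl | hxc
    · rw [hendc]; simp
    · have hxA' : x ∈ A' := (hA' x).mpr (Or.inr ⟨hx, hxc⟩)
      rw [hflow'.source_in x hxA']; simp
  · -- sink_in
    intro x hx
    have hxc : x ≠ c := fun h => hcB (h ▸ hx)
    rw [endsAt_erase, Finset.erase_eq_of_notMem (by
      intro hm; exact hxc ((mem_endsAt.mp hm).2 ▸ rfl))]
    exact hflow'.sink_in x hx
  · -- sink_out
    intro x hx
    rw [beginsAt_erase, hflow'.sink_out x hx]; simp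
  · -- transit
    intro r hrA hrB
    by_cases hr1 : r = c - 1
    · subst hr1
      left
      constructor
      · rw [beginsAt_erase, hbegc1]; simp
      · rw [endsAt_erase, hflow'.source_in _ hc1A']; simp
    · have hrc : r ≠ c := fun h => hrA (h ▸ hcA)
      have hrA' : r ∉ A' := notA' r hrA hr1
      rcases hflow'.transit r hrA' hrB with ⟨hb, he⟩ | ⟨hb, he⟩
      · left
        rw [beginsAt_erase, endsAt_erase, hb, he]; simp
      · right
        rw [beginsAt_erase, endsAt_erase,
          Finset.erase_eq_of_notMem (by
            intro hm; exact hr1 (mem_beginsAt.mp hm).2.symm),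
          Finset.erase_eq_of_notMem (by
            intro hm; exact hrc (mem_endsAt.mp hm).2.symm)]
        exact ⟨hb, he⟩
  · -- transit bound
    intro r htr
    obtain ⟨⟨e, he, hre⟩, hrA, hrB⟩ := mem_transitSet.mp htr
    by_cases hr1 : r = c - 1
    · omega
    · have hrA' : r ∉ A' := notA' r hrA hr1
      exact htr' r (mem_transitSet.mpr ⟨⟨e, Finset.mem_of_mem_erase he, hre⟩, hrA', hrB⟩)
  · -- LDefined
    intro e he h1
    have h2 : e ∈ beginsAt E' (c - 1) :=
      mem_beginsAt.mpr ⟨Finset.mem_of_mem_erase he, h1⟩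
    rw [hbegc1, Finset.mem_singleton] at h2
    exact (Finset.notMem_erase _ _) (h2 ▸ he)
  · rw [heq]; exact ⟨A', B, hflow'⟩

end Cor19

namespace Cor19

lemma existL1 {i c : ℤ} {A A' B : Finset ℤ} {E' : FlowGraph} {s₀ : ℤ}
    (hcA : c ∈ A) (hc1A : c - 1 ∉ A)
    (hA' : ∀ r, r ∈ A' ↔ (r = c - 1 ∨ (r ∈ A ∧ r ≠ c)))
    (hAi : ∀ x ∈ A, x ≤ i) (hBi : ∀ x ∈ B, i < x)
    (hflow' : IsFlow E' A' B)
    (htr' : ∀ r, IsTransitPoint E' A' B r → r ≤ i)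
    (hendc : endsAt E' c = {(s₀, c)}) (hs0ne : s₀ ≠ c - 1)
    (hbegc : (beginsAt E' c).card = 1) :
    (IsFlow (E'.image (g1 c)) A B ∧
      ∀ r, IsTransitPoint (E'.image (g1 c)) A B r → r ≤ i) ∧
    LDefined A B c (E'.image (g1 c)) .L1 ∧
    IsFlowGraph (LApply c (E'.image (g1 c)) .L1) ∧
    LApply c (E'.image (g1 c)) .L1 = E' := by
  have hc1A' : c - 1 ∈ A' := (hA' _).mpr (Or.inl rfl)
  have hcA' : c ∉ A' := by
    intro h; rcases (hA' c).mp h with h | ⟨_, h⟩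
    · omega
    · exact h rfl
  have hci : c ≤ i := hAi c hcA
  have hcB : c ∉ B := fun h => absurd (hBi c h) (by omega)
  have hc1B : c - 1 ∉ B := fun h => absurd (hBi _ h) (by omega)
  have notA' : ∀ r, r ∉ A → r ≠ c - 1 → r ∉ A' := by
    intro r h h1 hm
    rcases (hA' r).mp hm with h2 | ⟨h2, _⟩
    · exact h1 h2
    · exact h h2
  have hs0c : (s₀, c) ∈ E' := by
    have h : (s₀, c) ∈ endsAt E' c := by rw [hendc]; exact Finset.mem_singleton_self _
    exact (mem_endsAt.mp h).1
  have hs0lt : s₀ < c := hflow'.edge_lt _ hs0c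
  have hs0lt1 : s₀ < c - 1 := by omega
  have hE'c1 : endsAt E' (c - 1) = ∅ := hflow'.source_in _ hc1A'
  have hbegc1 : (beginsAt E' (c - 1)).card = 1 := hflow'.source_out _ hc1A'
  have hs0B : s₀ ∉ B := by
    intro h
    have h2 : (s₀, c) ∈ beginsAt E' s₀ := mem_beginsAt.mpr ⟨hs0c, rfl⟩
    rw [hflow'.sink_out s₀ h] at h2
    exact absurd h2 (Finset.notMem_empty _)
  have hbegs0 : beginsAt E' s₀ = {(s₀, c)} := by
    have hm : (s₀, c) ∈ beginsAt E' s₀ := mem_beginsAt.mpr ⟨hs0c, rfl⟩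
    by_cases h : s₀ ∈ A'
    · exact eq_singleton_of_card_one (hflow'.source_out _ h) hm
    · rcases hflow'.transit s₀ h hs0B with ⟨hb, _⟩ | ⟨hb, _⟩
      · rw [hb] at hm; exact absurd hm (Finset.notMem_empty _)
      · exact eq_singleton_of_card_one hb hm
  have heq2 : E'.image (g1 c) = insert (s₀, c - 1) (E'.erase (s₀, c)) := bridge1 c hendc
  have heq : LApply c (E'.image (g1 c)) .L1 = E' := by
    rw [heq2]
    show Finset.image _ (insert (s₀, c - 1) (E'.erase (s₀, c))) = E'
    rw [Finset.image_insert]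
    have h1 : (if ((s₀ : ℤ), c - 1).2 = c - 1 then (((s₀ : ℤ), c - 1).1, c) else (s₀, c - 1)) = (s₀, c) := by
      simp
    rw [h1]
    have h2 : Finset.image (fun e : ℤ × ℤ => if e.2 = c - 1 then (e.1, c) else e) (E'.erase (s₀, c))
        = E'.erase (s₀, c) := by
      have hcongr : ∀ e ∈ E'.erase (s₀, c),
          (fun e : ℤ × ℤ => if e.2 = c - 1 then (e.1, c) else e) e = id e := by
        intro e he
        have heE : e ∈ E' := Finset.mem_of_mem_erase he
        have h3 : e.2 ≠ c - 1 := by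
          intro h4
          have h5 : e ∈ endsAt E' (c - 1) := mem_endsAt.mpr ⟨heE, h4⟩
          rw [hE'c1] at h5; exact absurd h5 (Finset.notMem_empty _)
        simp [h3]
      rw [Finset.image_congr hcongr, Finset.image_id]
    rw [h2]
    exact Finset.insert_erase hs0c
  rw [heq2]
  refine ⟨⟨⟨?_, ?_, ?_, ?_, ?_, ?_, ?_⟩, ?_⟩, ?_, by rw [← heq2, heq]; exact ⟨A', B, hflow'⟩, by rw [← heq2]; exact heq⟩
  · -- edge_lt
    intro e he
    rcases Finset.mem_insert.mp he with rfl | he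
    · show s₀ < c - 1; omega
    · exact hflow'.edge_lt e (Finset.mem_of_mem_erase he)
  · rw [Finset.disjoint_left]
    intro x hx hy
    have := hAi x hx; have := hBi x hy; omega
  · -- source_out
    intro x hx
    rw [beginsAt_insert, beginsAt_erase]
    by_cases hxc : x = c
    · rw [hxc]
      rw [if_neg (show ¬((s₀, c - 1).1 = c) from fun hh => by simp at hh; omega)]
      rw [Finset.erase_eq_of_notMem (by
        intro hm; have := (mem_beginsAt.mp hm).2; simp at this; omega)]
      exact hbegc
    · have hxA' : x ∈ A' := (hA' x).mpr (Or.inr ⟨hx, hxc⟩)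
      have hx1 : x ≠ c - 1 := fun h => hc1A (h ▸ hx)
      by_cases hxs : x = s₀
      · rw [hxs]
        rw [if_pos (show ((s₀ : ℤ), c - 1).1 = s₀ from rfl)]
        rw [hbegs0]
        simp
      · rw [if_neg (show ¬((s₀, c - 1).1 = x) from fun hh => hxs (by simpa using hh.symm))]
        rw [Finset.erase_eq_of_notMem (by
          intro hm; exact hxs ((mem_beginsAt.mp hm).2.symm : x = s₀) )]
        exact hflow'.source_out x hxA'
  · -- source_in
    intro x hx
    rw [endsAt_insert, endsAt_erase]
    have hx1 : x ≠ c - 1 := fun h => hc1A (h ▸ hx)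
    rw [if_neg (show ¬((s₀, c - 1).2 = x) from fun hh => hx1 (by simpa using hh.symm))]
    rcases (em (x = c)) with rfl | hxc
    · rw [hendc]; simp
    · have hxA' : x ∈ A' := (hA' x).mpr (Or.inr ⟨hx, hxc⟩)
      rw [hflow'.source_in x hxA']; simp
  · -- sink_in
    intro x hx
    have hxi : i < x := hBi x hx
    rw [endsAt_insert, endsAt_erase]
    rw [if_neg (show ¬((s₀, c - 1).2 = x) from fun hh => by simp at hh; omega)]
    rw [Finset.erase_eq_of_notMem (by
      intro hm; have := (mem_endsAt.mp hm).2; simp at this; omega)]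
    exact hflow'.sink_in x hx
  · -- sink_out
    intro x hx
    have hxi : i < x := hBi x hx
    rw [beginsAt_insert, beginsAt_erase]
    rw [if_neg (show ¬((s₀, c - 1).1 = x) from fun hh => by simp at hh; omega)]
    rw [hflow'.sink_out x hx]; simp
  · -- transit
    intro r hrA hrB
    by_cases hr1 : r = c - 1
    · subst hr1
      right
      constructor
      · rw [beginsAt_insert, beginsAt_erase]
        rw [if_neg (show ¬((s₀, c - 1).1 = c - 1) from fun hh => by simp at hh; omega)]
        rw [Finset.erase_eq_of_notMem (by
          intro hm; have := (mem_beginsAt.mp hm).2; simp at this; omega)]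
        exact hbegc1
      · rw [endsAt_insert, endsAt_erase]
        rw [if_pos (show (s₀, c - 1).2 = c - 1 from rfl)]
        rw [hE'c1]
        simp
    · have hrc : r ≠ c := fun h => hrA (h ▸ hcA)
      have hrA' : r ∉ A' := notA' r hrA hr1
      by_cases hrs : r = s₀
      · rw [hrs]
        have hrA2 : s₀ ∉ A' := hrs ▸ hrA'
        rcases hflow'.transit s₀ hrA2 hs0B with ⟨hb, _⟩ | ⟨_, he⟩
        · exfalso
          have hm : (s₀, c) ∈ beginsAt E' s₀ := mem_beginsAt.mpr ⟨hs0c, rfl⟩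
          rw [hb] at hm; exact absurd hm (Finset.notMem_empty _)
        · right
          constructor
          · rw [beginsAt_insert, beginsAt_erase]
            rw [if_pos (show ((s₀ : ℤ), c - 1).1 = s₀ from rfl)]
            rw [hbegs0]
            simp
          · rw [endsAt_insert, endsAt_erase]
            rw [if_neg (show ¬(((s₀ : ℤ), c - 1).2 = s₀) from fun hh => by simp at hh; omega)]
            rw [Finset.erase_eq_of_notMem (by
              intro hm; have := (mem_endsAt.mp hm).2; simp at this; omega)]
            exact he
      · have hnb : ¬((s₀, c - 1).1 = r) := fun hh => hrs (by simpa using hh.symm)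
        have hne : ¬((s₀, c - 1).2 = r) := fun hh => hr1 (by simpa using hh.symm)
        have hb_eq : beginsAt (insert (s₀, c - 1) (E'.erase (s₀, c))) r = beginsAt E' r := by
          rw [beginsAt_insert, beginsAt_erase, if_neg hnb]
          rw [Finset.erase_eq_of_notMem (by
            intro hm; exact hrs ((mem_beginsAt.mp hm).2.symm : r = s₀))]
        have he_eq : endsAt (insert (s₀, c - 1) (E'.erase (s₀, c))) r = endsAt E' r := by
          rw [endsAt_insert, endsAt_erase, if_neg hne]
          rw [Finset.erase_eq_of_notMem (by
            intro hm; exact hrc ((mem_endsAt.mp hm).2.symm : r = c))]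
        rw [hb_eq, he_eq]
        exact hflow'.transit r hrA' hrB
  · -- transit bound
    intro r htr
    obtain ⟨⟨e, he, hre⟩, hrA, hrB⟩ := mem_transitSet.mp htr
    by_cases hr1 : r = c - 1
    · omega
    · by_cases hrs : r = s₀
      · omega
      · have heE : e ∈ E' := by
          rcases Finset.mem_insert.mp he with rfl | he2
          · exfalso
            rcases hre with h | h
            · exact hrs (by simpa using h.symm)
            · exact hr1 (by simpa using h.symm)
          · exact Finset.mem_of_mem_erase he2
        have hrA' : r ∉ A' := notA' r hrA hr1
        exact htr' r (mem_transitSet.mpr ⟨⟨e, heE, hre⟩, hrA', hrB⟩)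
  · -- LDefined L1
    show IsTransitPoint _ A B (c - 1)
    exact mem_transitSet.mpr
      ⟨⟨(s₀, c - 1), Finset.mem_insert_self _ _, Or.inr rfl⟩, hc1A, hc1B⟩

end Cor19

namespace Cor19

lemma existL3 {i c : ℤ} {A A' B : Finset ℤ} {E' : FlowGraph} {t₀ : ℤ}
    (hcA : c ∈ A) (hc1A : c - 1 ∉ A)
    (hA' : ∀ r, r ∈ A' ↔ (r = c - 1 ∨ (r ∈ A ∧ r ≠ c)))
    (hAi : ∀ x ∈ A, x ≤ i) (hBi : ∀ x ∈ B, i < x)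
    (hflow' : IsFlow E' A' B)
    (htr' : ∀ r, IsTransitPoint E' A' B r → r ≤ i)
    (hbegc : beginsAt E' c = ∅) (hendc : endsAt E' c = ∅)
    (hbegc1 : beginsAt E' (c - 1) = {(c - 1, t₀)}) :
    (IsFlow (E'.image (g3 c)) A B ∧
      ∀ r, IsTransitPoint (E'.image (g3 c)) A B r → r ≤ i) ∧
    LDefined A B c (E'.image (g3 c)) .L3 ∧
    IsFlowGraph (LApply c (E'.image (g3 c)) .L3) ∧
    LApply c (E'.image (g3 c)) .L3 = E' := by
  have hc1A' : c - 1 ∈ A' := (hA' _).mpr (Or.inl rfl)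
  have hcA' : c ∉ A' := by
    intro h; rcases (hA' c).mp h with h | ⟨_, h⟩
    · omega
    · exact h rfl
  have hci : c ≤ i := hAi c hcA
  have hcB : c ∉ B := fun h => absurd (hBi c h) (by omega)
  have hc1B : c - 1 ∉ B := fun h => absurd (hBi _ h) (by omega)
  have notA' : ∀ r, r ∉ A → r ≠ c - 1 → r ∉ A' := by
    intro r h h1 hm
    rcases (hA' r).mp hm with h2 | ⟨h2, _⟩
    · exact h1 h2
    · exact h h2
  have ht0mem : (c - 1, t₀) ∈ E' := by
    have h : (c - 1, t₀) ∈ beginsAt E' (c - 1) := by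
      rw [hbegc1]; exact Finset.mem_singleton_self _
    exact (mem_beginsAt.mp h).1
  have ht0gt : c - 1 < t₀ := hflow'.edge_lt _ ht0mem
  have ht0c : t₀ ≠ c := by
    intro h
    have hm : (c - 1, t₀) ∈ endsAt E' c := mem_endsAt.mpr ⟨ht0mem, h⟩
    rw [hendc] at hm; exact absurd hm (Finset.notMem_empty _)
  have ht0gtc : c < t₀ := by omega
  have ht0A' : t₀ ∉ A' := by
    intro h
    have hm : (c - 1, t₀) ∈ endsAt E' t₀ := mem_endsAt.mpr ⟨ht0mem, rfl⟩
    rw [hflow'.source_in t₀ h] at hm; exact absurd hm (Finset.notMem_empty _)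
  have ht0A : t₀ ∉ A := by
    intro h
    exact ht0A' ((hA' t₀).mpr (Or.inr ⟨h, ht0c⟩))
  have hE'c1 : endsAt E' (c - 1) = ∅ := hflow'.source_in _ hc1A'
  have heq2 : E'.image (g3 c) = insert (c, t₀) (E'.erase (c - 1, t₀)) := bridge3 c hbegc1
  have heq : LApply c (E'.image (g3 c)) .L3 = E' := by
    rw [heq2]
    show Finset.image _ (insert (c, t₀) (E'.erase (c - 1, t₀))) = E'
    rw [Finset.image_insert]
    have h1 : (if ((c : ℤ), t₀).1 = c then (c - 1, ((c : ℤ), t₀).2) else (c, t₀)) = (c - 1, t₀) := by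
      simp
    rw [h1]
    have h2 : Finset.image (fun e : ℤ × ℤ => if e.1 = c then (c - 1, e.2) else e) (E'.erase (c - 1, t₀))
        = E'.erase (c - 1, t₀) := by
      have hcongr : ∀ e ∈ E'.erase (c - 1, t₀),
          (fun e : ℤ × ℤ => if e.1 = c then (c - 1, e.2) else e) e = id e := by
        intro e he
        have heE : e ∈ E' := Finset.mem_of_mem_erase he
        have h3 : e.1 ≠ c := by
          intro h4
          have h5 : e ∈ beginsAt E' c := mem_beginsAt.mpr ⟨heE, h4⟩
          rw [hbegc] at h5; exact absurd h5 (Finset.notMem_empty _)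
        simp [h3]
      rw [Finset.image_congr hcongr, Finset.image_id]
    rw [h2]
    exact Finset.insert_erase ht0mem
  rw [heq2]
  refine ⟨⟨⟨?_, ?_, ?_, ?_, ?_, ?_, ?_⟩, ?_⟩, ?_, by rw [← heq2, heq]; exact ⟨A', B, hflow'⟩, by rw [← heq2]; exact heq⟩
  · -- edge_lt
    intro e he
    rcases Finset.mem_insert.mp he with rfl2 | he
    · rw [rfl2]; exact ht0gtc
    · exact hflow'.edge_lt e (Finset.mem_of_mem_erase he)
  · rw [Finset.disjoint_left]
    intro x hx hy
    have := hAi x hx; have := hBi x hy; omega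
  · -- source_out
    intro x hx
    rw [beginsAt_insert, beginsAt_erase]
    by_cases hxc : x = c
    · rw [hxc]
      rw [if_pos (show ((c : ℤ), t₀).1 = c from rfl)]
      rw [hbegc]
      simp
    · have hxA' : x ∈ A' := (hA' x).mpr (Or.inr ⟨hx, hxc⟩)
      have hx1 : x ≠ c - 1 := fun h => hc1A (h ▸ hx)
      rw [if_neg (show ¬(((c : ℤ), t₀).1 = x) from fun hh => hxc (by simpa using hh.symm))]
      rw [Finset.erase_eq_of_notMem (by
        intro hm; exact hx1 ((mem_beginsAt.mp hm).2.symm : x = c - 1))]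
      exact hflow'.source_out x hxA'
  · -- source_in
    intro x hx
    rw [endsAt_insert, endsAt_erase]
    rw [if_neg (show ¬(((c : ℤ), t₀).2 = x) from fun hh => ht0A (by rw [(show t₀ = x from hh)]; exact hx))]
    by_cases hxc : x = c
    · rw [hxc, hendc]; simp
    · have hxA' : x ∈ A' := (hA' x).mpr (Or.inr ⟨hx, hxc⟩)
      rw [hflow'.source_in x hxA']; simp
  · -- sink_in
    intro x hx
    have hxi : i < x := hBi x hx
    rw [endsAt_insert, endsAt_erase]
    by_cases hxt : x = t₀
    · rw [hxt]
      rw [if_pos (show ((c : ℤ), t₀).2 = t₀ from rfl)]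
      have ht0B : t₀ ∈ B := hxt ▸ hx
      have hsing : endsAt E' t₀ = {(c - 1, t₀)} :=
        eq_singleton_of_card_one (hflow'.sink_in t₀ ht0B) (mem_endsAt.mpr ⟨ht0mem, rfl⟩)
      rw [hsing]
      simp
    · rw [if_neg (show ¬(((c : ℤ), t₀).2 = x) from fun hh => hxt (by simpa using hh.symm))]
      rw [Finset.erase_eq_of_notMem (by
        intro hm; exact hxt ((mem_endsAt.mp hm).2.symm : x = t₀))]
      exact hflow'.sink_in x hx
  · -- sink_out
    intro x hx
    have hxi : i < x := hBi x hx
    rw [beginsAt_insert, beginsAt_erase]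
    rw [if_neg (show ¬(((c : ℤ), t₀).1 = x) from fun hh => by simp at hh; omega)]
    rw [hflow'.sink_out x hx]; simp
  · -- transit
    intro r hrA hrB
    by_cases hr1 : r = c - 1
    · subst hr1
      left
      constructor
      · rw [beginsAt_insert, beginsAt_erase]
        rw [if_neg (show ¬(((c : ℤ), t₀).1 = c - 1) from fun hh => by simp at hh; omega)]
        rw [hbegc1]
        simp
      · rw [endsAt_insert, endsAt_erase]
        rw [if_neg (show ¬(((c : ℤ), t₀).2 = c - 1) from fun hh => by simp at hh; omega)]
        rw [hE'c1]
        simp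
    · have hrc : r ≠ c := fun h => hrA (h ▸ hcA)
      have hrA' : r ∉ A' := notA' r hrA hr1
      by_cases hrt : r = t₀
      · rw [hrt]
        have hrA2 : t₀ ∉ A' := hrt ▸ hrA'
        have hrB2 : t₀ ∉ B := hrt ▸ hrB
        rcases hflow'.transit t₀ hrA2 hrB2 with ⟨_, he⟩ | ⟨hb, he⟩
        · exfalso
          have hm : (c - 1, t₀) ∈ endsAt E' t₀ := mem_endsAt.mpr ⟨ht0mem, rfl⟩
          rw [he] at hm; exact absurd hm (Finset.notMem_empty _)
        · right
          constructor
          · rw [beginsAt_insert, beginsAt_erase]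
            rw [if_neg (show ¬(((c : ℤ), t₀).1 = t₀) from fun hh => by simp at hh; omega)]
            rw [Finset.erase_eq_of_notMem (by
              intro hm; have := (mem_beginsAt.mp hm).2; simp at this; omega)]
            exact hb
          · rw [endsAt_insert, endsAt_erase]
            rw [if_pos (show ((c : ℤ), t₀).2 = t₀ from rfl)]
            have hsing : endsAt E' t₀ = {(c - 1, t₀)} :=
              eq_singleton_of_card_one he (mem_endsAt.mpr ⟨ht0mem, rfl⟩)
            rw [hsing]
            simp
      · have hb_eq : beginsAt (insert ((c : ℤ), t₀) (E'.erase (c - 1, t₀))) r = beginsAt E' r := by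
          rw [beginsAt_insert, beginsAt_erase,
            if_neg (show ¬(((c : ℤ), t₀).1 = r) from fun hh => hrc (show r = c from hh.symm))]
          rw [Finset.erase_eq_of_notMem (by
            intro hm; exact hr1 ((mem_beginsAt.mp hm).2.symm : r = c - 1))]
        have he_eq : endsAt (insert ((c : ℤ), t₀) (E'.erase (c - 1, t₀))) r = endsAt E' r := by
          rw [endsAt_insert, endsAt_erase,
            if_neg (show ¬(((c : ℤ), t₀).2 = r) from fun hh => hrt (show r = t₀ from hh.symm))]
          rw [Finset.erase_eq_of_notMem (by
            intro hm; exact hrt ((mem_endsAt.mp hm).2.symm : r = t₀))]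
        rw [hb_eq, he_eq]
        exact hflow'.transit r hrA' hrB
  · -- transit bound
    intro r htr
    obtain ⟨⟨e, he, hre⟩, hrA, hrB⟩ := mem_transitSet.mp htr
    by_cases hr1 : r = c - 1
    · omega
    · have hrc : r ≠ c := fun h => hrA (h ▸ hcA)
      have hex : ∃ e2 ∈ E', e2.1 = r ∨ e2.2 = r := by
        rcases Finset.mem_insert.mp he with rfl2 | he2
        · rw [rfl2] at hre
          rcases hre with h | h
          · exact (hrc (show r = c from h.symm)).elim
          · exact ⟨(c - 1, t₀), ht0mem, Or.inr h⟩
        · exact ⟨e, Finset.mem_of_mem_erase he2, hre⟩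
      obtain ⟨e2, he2, hre2⟩ := hex
      have hrA' : r ∉ A' := notA' r hrA hr1
      exact htr' r (mem_transitSet.mpr ⟨⟨e2, he2, hre2⟩, hrA', hrB⟩)
  · -- LDefined L3
    exact hc1A

end Cor19

namespace Cor19

lemma main_core {i c : ℤ} {A A' B : Finset ℤ} {E' : FlowGraph}
    (hA : ∀ r, r ∈ A ↔ (r = c ∨ (r ∈ A' ∧ r ≠ c - 1)))
    (hcA' : c ∉ A') (hc1A' : c - 1 ∈ A')
    (hAi : ∀ x ∈ A, x ≤ i) (hBi : ∀ x ∈ B, i < x)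
    (hflow' : IsFlow E' A' B)
    (htr' : ∀ r, IsTransitPoint E' A' B r → r ≤ i) :
    ∃! p : LOp × FlowGraph,
      (IsFlow p.2 A B ∧ ∀ r, IsTransitPoint p.2 A B r → r ≤ i) ∧
      LDefined A B c p.2 p.1 ∧
      IsFlowGraph (LApply c p.2 p.1) ∧
      LApply c p.2 p.1 = E' := by
  have hcA : c ∈ A := (hA c).mpr (Or.inl rfl)
  have hc1A : c - 1 ∉ A := by
    intro h
    rcases (hA _).mp h with h2 | ⟨_, h2⟩
    · omega
    · exact h2 rfl
  have hA' : ∀ r, r ∈ A' ↔ (r = c - 1 ∨ (r ∈ A ∧ r ≠ c)) := by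
    intro r
    constructor
    · intro hm
      by_cases hr1 : r = c - 1
      · exact Or.inl hr1
      · refine Or.inr ⟨(hA r).mpr (Or.inr ⟨hm, hr1⟩), ?_⟩
        intro hrc; exact hcA' (hrc ▸ hm)
    · rintro (rfl | ⟨h, hc⟩)
      · exact hc1A'
      · rcases (hA r).mp h with h2 | ⟨h2, _⟩
        · exact absurd h2 hc
        · exact h2
  have hci : c ≤ i := hAi c hcA
  have hcB : c ∉ B := fun h => absurd (hBi c h) (by omega)
  have hE'c1 : endsAt E' (c - 1) = ∅ := hflow'.source_in _ hc1A'
  rcases hflow'.transit c hcA' hcB with ⟨hb, he⟩ | ⟨hb, he⟩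
  · -- case L3 : c meets no edge of E'
    obtain ⟨e0, he0⟩ := Finset.card_eq_one.mp (hflow'.source_out _ hc1A')
    have he0m : e0 ∈ beginsAt E' (c - 1) := by rw [he0]; exact Finset.mem_singleton_self _
    have he0eq : e0 = (c - 1, e0.2) := Prod.ext (mem_beginsAt.mp he0m).2 rfl
    have hbegc1 : beginsAt E' (c - 1) = {(c - 1, e0.2)} := by rw [he0, ← he0eq]
    obtain ⟨hflowpair, hdef, hfg, heqq⟩ :=
      existL3 hcA hc1A hA' hAi hBi hflow' htr' hb he hbegc1
    refine ⟨(.L3, E'.image (g3 c)), ⟨hflowpair, hdef, hfg, heqq⟩, ?_⟩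
    rintro ⟨O, Γ⟩ ⟨⟨hpflow, _⟩, hpdef, _, hpeq⟩
    cases O with
    | L1 =>
      exfalso
      obtain ⟨_, hne⟩ := sigL1 hpflow hcA hpdef hpeq
      rw [he] at hne
      exact Finset.not_nonempty_empty hne
    | L2 =>
      exfalso
      have hm : (c - 1, c) ∈ E' := by
        rw [← hpeq]; exact Finset.mem_insert_self _ _
      have hm2 : (c - 1, c) ∈ endsAt E' c := mem_endsAt.mpr ⟨hm, rfl⟩
      rw [he] at hm2
      exact absurd hm2 (Finset.notMem_empty _)
    | L3 =>
      have hΓ := shapeL3 hpflow hc1A (fun h => absurd (hBi _ h) (by omega)) hE'c1 hpeq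
      rw [Prod.mk.injEq]
      exact ⟨rfl, hΓ⟩
  · -- c is a transit point of E'
    obtain ⟨e0, he0⟩ := Finset.card_eq_one.mp he
    have he0m : e0 ∈ endsAt E' c := by rw [he0]; exact Finset.mem_singleton_self _
    have he0eq : e0 = (e0.1, c) := Prod.ext rfl (mem_endsAt.mp he0m).2
    have hendc : endsAt E' c = {(e0.1, c)} := by rw [he0, ← he0eq]
    by_cases hs : e0.1 = c - 1
    · -- case L2
      have hmem : (c - 1, c) ∈ E' := by
        have := (mem_endsAt.mp he0m).1
        rw [he0eq, hs] at this
        exact this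
      obtain ⟨hflowpair, hdef, hfg, heqq⟩ :=
        existL2 hcA hc1A hA' hAi hBi hflow' htr' hmem
      refine ⟨(.L2, E'.erase (c - 1, c)), ⟨hflowpair, hdef, hfg, heqq⟩, ?_⟩
      rintro ⟨O, Γ⟩ ⟨⟨hpflow, _⟩, hpdef, _, hpeq⟩
      cases O with
      | L1 =>
        exfalso
        obtain ⟨hnm, _⟩ := sigL1 hpflow hcA hpdef hpeq
        exact hnm hmem
      | L2 =>
        have hΓ := shapeL2 hpflow hcA hpeq
        rw [Prod.mk.injEq]
        exact ⟨rfl, hΓ⟩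
      | L3 =>
        exfalso
        have hz := sigL3 hpflow hcA hpeq
        have hm2 : (c - 1, c) ∈ endsAt E' c := mem_endsAt.mpr ⟨hmem, rfl⟩
        rw [hz] at hm2
        exact absurd hm2 (Finset.notMem_empty _)
    · -- case L1
      obtain ⟨hflowpair, hdef, hfg, heqq⟩ :=
        existL1 hcA hc1A hA' hAi hBi hflow' htr' hendc hs hb
      refine ⟨(.L1, E'.image (g1 c)), ⟨hflowpair, hdef, hfg, heqq⟩, ?_⟩
      rintro ⟨O, Γ⟩ ⟨⟨hpflow, _⟩, hpdef, _, hpeq⟩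
      cases O with
      | L1 =>
        have hΓ := shapeL1 hpflow hcA hpeq
        rw [Prod.mk.injEq]
        exact ⟨rfl, hΓ⟩
      | L2 =>
        exfalso
        have hm : (c - 1, c) ∈ E' := by
          rw [← hpeq]; exact Finset.mem_insert_self _ _
        have hm2 : (c - 1, c) ∈ endsAt E' c := mem_endsAt.mpr ⟨hm, rfl⟩
        rw [hendc, Finset.mem_singleton] at hm2
        exact hs (congrArg Prod.fst hm2).symm
      | L3 =>
        exfalso
        have hz := sigL3 hpflow hcA hpeq
        have hm2 : (e0.1, c) ∈ endsAt E' c := by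
          rw [hendc]; exact Finset.mem_singleton_self _
        rw [hz] at hm2
        exact absurd hm2 (Finset.notMem_empty _)

end Cor19

/-- Corollary 19: suppose `q ≥ 1` and `a_q - 1 ∉ {a_1,…,a_{q-1}}`. For every flow
`Γ' ∈ 𝓕_i(a_1,…,a_{q-1}, a_q - 1; b_1,…,b_q)` there is a unique pair `(O, Γ)`
with `O ∈ {L_1, L_2, L_3}` and `Γ ∈ 𝓕_i(a_1,…,a_q; b_1,…,b_q)` such that `O(Γ)`
is well-defined, is a flow, and equals `Γ'`. -/
theorem statement8 {q : ℕ} (i : ℤ) (a b : Fin (q + 1) → ℤ)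
    (ha : StrictMono a) (hb : StrictAnti b)
    (hai : ∀ j, a j ≤ i) (hbi : ∀ j, i < b j)
    (hnew : ∀ j, a j ≠ a (Fin.last q) - 1)
    (E' : FlowGraph)
    (hE' : InF i (Function.update a (Fin.last q) (a (Fin.last q) - 1)) b E') :
    ∃! p : LOp × FlowGraph,
      InF i a b p.2 ∧
      LDefined (srcSet a) (srcSet b) (a (Fin.last q)) p.2 p.1 ∧
      IsFlowGraph (LApply (a (Fin.last q)) p.2 p.1) ∧
      LApply (a (Fin.last q)) p.2 p.1 = E' := by
  classical
  obtain ⟨hflow', htr'⟩ := hE'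
  have hainj := ha.injective
  have hA : ∀ r, r ∈ srcSet a ↔
      (r = a (Fin.last q) ∨
        (r ∈ srcSet (Function.update a (Fin.last q) (a (Fin.last q) - 1)) ∧
          r ≠ a (Fin.last q) - 1)) := by
    intro r
    simp only [srcSet, Finset.mem_image, Finset.mem_univ, true_and]
    constructor
    · rintro ⟨j, rfl⟩
      by_cases hj : j = Fin.last q
      · exact Or.inl (by rw [hj])
      · refine Or.inr ⟨⟨j, ?_⟩, hnew j⟩
        rw [Function.update_of_ne hj]
    · rintro (rfl | ⟨⟨j, hj⟩, hne⟩)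
      · exact ⟨Fin.last q, rfl⟩
      · by_cases h : j = Fin.last q
        · rw [h, Function.update_self] at hj
          exact absurd hj.symm hne
        · rw [Function.update_of_ne h] at hj
          exact ⟨j, hj⟩
  have hcA' : a (Fin.last q) ∉
      srcSet (Function.update a (Fin.last q) (a (Fin.last q) - 1)) := by
    simp only [srcSet, Finset.mem_image, Finset.mem_univ, true_and]
    rintro ⟨j, hj⟩
    by_cases h : j = Fin.last q
    · rw [h, Function.update_self] at hj; omega
    · rw [Function.update_of_ne h] at hj
      exact h (hainj hj)
  have hc1A' : a (Fin.last q) - 1 ∈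
      srcSet (Function.update a (Fin.last q) (a (Fin.last q) - 1)) := by
    simp only [srcSet, Finset.mem_image, Finset.mem_univ, true_and]
    exact ⟨Fin.last q, Function.update_self _ _ _⟩
  have hAi : ∀ x ∈ srcSet a, x ≤ i := by
    intro x hx
    simp only [srcSet, Finset.mem_image, Finset.mem_univ, true_and] at hx
    obtain ⟨j, rfl⟩ := hx
    exact hai j
  have hBi : ∀ x ∈ srcSet b, i < x := by
    intro x hx
    simp only [srcSet, Finset.mem_image, Finset.mem_univ, true_and] at hx
    obtain ⟨j, rfl⟩ := hx
    exact hbi j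
  exact Cor19.main_core hA hcA' hc1A' hAi hBi hflow' htr'
end

section
/- Suppose that a_q < i and i + 1 < b_q whenever q ≥ 1. Then for any flow Γ' ∈ 𝓕_i(a_1,…,a_q, i; b_1,…,b_q, i + 1), there exists a unique pair (O, Γ) with O ∈ {M_1, M_2} and Γ ∈ 𝓕_i(a_1,…,a_q; b_1,…,b_q) such that O(Γ) is well-defined and O(Γ) = Γ'. -/
open Finset

/-- The two operations `M_1`, `M_2`. -/
inductive MOp : Type | M1 | M2

/-- Well-definedness conditions for `M_1, M_2` on a flow `E` with sources `A`
and sinks `B`: `M_1` requires `i + 1` not to be a sink and `i` to be a transit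
point; `M_2` requires `i + 1` not to be a sink and that no edge begins at `i`. -/
def MDefined (A B : Finset ℤ) (i : ℤ) (E : FlowGraph) : MOp → Prop
  | .M1 => (i + 1) ∉ B ∧ IsTransitPoint E A B i
  | .M2 => (i + 1) ∉ B ∧ ∀ e ∈ E, e.1 ≠ i

/-- The effect of the operations: `M_1` replaces the edge `(s, i)` by
`(s, i + 1)`; `M_2` adds the edge `(i, i + 1)`. -/
def MApply (i : ℤ) (E : FlowGraph) : MOp → FlowGraph
  | .M1 => E.image (fun e => if e.2 = i then (e.1, i + 1) else e)
  | .M2 => insert (i, i + 1) E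

section Aux

lemma beginsAt_insert (E : FlowGraph) (e : ℤ × ℤ) (r : ℤ) :
    beginsAt (insert e E) r = if e.1 = r then insert e (beginsAt E r) else beginsAt E r := by
  simp [beginsAt, Finset.filter_insert]

lemma endsAt_insert (E : FlowGraph) (e : ℤ × ℤ) (r : ℤ) :
    endsAt (insert e E) r = if e.2 = r then insert e (endsAt E r) else endsAt E r := by
  simp [endsAt, Finset.filter_insert]

lemma beginsAt_erase (E : FlowGraph) (e : ℤ × ℤ) (r : ℤ) :
    beginsAt (E.erase e) r = (beginsAt E r).erase e := by
  simp [beginsAt, Finset.filter_erase]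

lemma endsAt_erase (E : FlowGraph) (e : ℤ × ℤ) (r : ℤ) :
    endsAt (E.erase e) r = (endsAt E r).erase e := by
  simp [endsAt, Finset.filter_erase]

lemma mem_beginsAt {E : FlowGraph} {e : ℤ × ℤ} {r : ℤ} :
    e ∈ beginsAt E r ↔ e ∈ E ∧ e.1 = r := Finset.mem_filter

lemma mem_endsAt {E : FlowGraph} {e : ℤ × ℤ} {r : ℤ} :
    e ∈ endsAt E r ↔ e ∈ E ∧ e.2 = r := Finset.mem_filter

lemma eq_singleton_of_card_one {s : Finset (ℤ × ℤ)} {e : ℤ × ℤ} (h : s.card = 1) (he : e ∈ s) :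
    s = {e} := by
  obtain ⟨x, hx⟩ := Finset.card_eq_one.mp h
  subst hx; simp_all

lemma srcSet_snoc {q : ℕ} (a : Fin q → ℤ) (x : ℤ) :
    srcSet (Fin.snoc a x) = insert x (srcSet a) := by
  ext y
  simp only [srcSet, mem_image, mem_univ, true_and, mem_insert]
  constructor
  · rintro ⟨j, rfl⟩
    rcases Fin.eq_castSucc_or_eq_last j with ⟨k, rfl⟩ | rfl
    · right; exact ⟨k, by simp⟩
    · left; simp
  · rintro (rfl | ⟨k, rfl⟩)
    · exact ⟨Fin.last q, by simp⟩
    · exact ⟨k.castSucc, by simp⟩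

lemma isTransit_iff (E : FlowGraph) (A B : Finset ℤ) (r : ℤ) :
    IsTransitPoint E A B r ↔ (∃ e ∈ E, e.1 = r ∨ e.2 = r) ∧ r ∉ A ∧ r ∉ B := by
  simp only [IsTransitPoint, transitSet, mem_sdiff, mem_union, mem_image]
  aesop

lemma mem_srcSet {q : ℕ} {a : Fin q → ℤ} {x : ℤ} : x ∈ srcSet a ↔ ∃ j, a j = x := by
  simp [srcSet]

end Aux

section Inv

/-- Inverse characterization for `M2`. -/
lemma M2_inv {q : ℕ} (i : ℤ) (a b : Fin q → ℤ) (E' Γ : FlowGraph)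
    (hdef : MDefined (srcSet a) (srcSet b) i Γ .M2)
    (happ : MApply i Γ .M2 = E') :
    (i, i+1) ∈ E' ∧ E'.erase (i, i+1) = Γ := by
  obtain ⟨-, hne⟩ := hdef
  have h0 : (i, i+1) ∉ Γ := fun h => hne _ h rfl
  have h1 : insert (i, i+1) Γ = E' := happ
  constructor
  · rw [← h1]; exact Finset.mem_insert_self _ _
  · rw [← h1, Finset.erase_insert h0]

/-- Inverse characterization for `M1`. -/
lemma M1_inv {q : ℕ} (i : ℤ) (a b : Fin q → ℤ)
    (hai : ∀ j, a j < i) (hbi : ∀ j, i + 1 < b j) (E' Γ : FlowGraph)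
    (hΓ : InF i a b Γ)
    (hdef : MDefined (srcSet a) (srcSet b) i Γ .M1)
    (happ : MApply i Γ .M1 = E') :
    (i, i+1) ∉ E' ∧ E'.image (fun e => if e.2 = i + 1 then (e.1, i) else e) = Γ := by
  have hi1A : (i+1) ∉ srcSet a := by
    rw [mem_srcSet]; rintro ⟨j, hj⟩; have := hai j; omega
  have hi1B : (i+1) ∉ srcSet b := by
    rw [mem_srcSet]; rintro ⟨j, hj⟩; have := hbi j; omega
  -- no edge of Γ meets i+1
  have h1 : ∀ e ∈ Γ, e.1 ≠ i + 1 ∧ e.2 ≠ i + 1 := by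
    intro e he
    constructor <;> intro h <;>
      [ (have : IsTransitPoint Γ (srcSet a) (srcSet b) (i+1) :=
          (isTransit_iff _ _ _ _).mpr ⟨⟨e, he, Or.inl h⟩, hi1A, hi1B⟩);
        (have : IsTransitPoint Γ (srcSet a) (srcSet b) (i+1) :=
          (isTransit_iff _ _ _ _).mpr ⟨⟨e, he, Or.inr h⟩, hi1A, hi1B⟩) ] <;>
      exact absurd (hΓ.2 _ this) (by omega)
  have h2 : (i, i+1) ∉ E' := by
    rw [← happ]
    intro hmem
    obtain ⟨x, hx, hfx⟩ := Finset.mem_image.mp hmem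
    by_cases hx2 : x.2 = i
    · rw [if_pos hx2] at hfx
      have hx1 : x.1 = i := congrArg Prod.fst hfx
      have := hΓ.1.edge_lt x hx
      omega
    · rw [if_neg hx2] at hfx
      exact (h1 x hx).2 (by rw [hfx])
  refine ⟨h2, ?_⟩
  rw [← happ]
  show ((Γ.image _).image _) = Γ
  rw [Finset.image_image]
  have : ∀ e ∈ Γ, ((fun e => if e.2 = i + 1 then (e.1, i) else e) ∘
      (fun e => if e.2 = i then (e.1, i + 1) else e)) e = id e := by
    intro e he
    by_cases hx2 : e.2 = i
    · simp only [Function.comp_apply, if_pos hx2, if_pos rfl, id]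
      exact Prod.ext rfl hx2.symm
    · simp only [Function.comp_apply, if_neg hx2, if_neg ((h1 e he).2), id]
  rw [Finset.image_congr this, Finset.image_id]

end Inv

section Exists

lemma exists_M2 {q : ℕ} (i : ℤ) (a b : Fin q → ℤ)
    (hai : ∀ j, a j < i) (hbi : ∀ j, i + 1 < b j) (E' : FlowGraph)
    (hE' : InF i (Fin.snoc a i) (Fin.snoc b (i + 1)) E')
    (hmem : (i, i + 1) ∈ E') :
    InF i a b (E'.erase (i, i + 1)) ∧
    MDefined (srcSet a) (srcSet b) i (E'.erase (i, i + 1)) .M2 ∧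
    MApply i (E'.erase (i, i + 1)) .M2 = E' := by
  obtain ⟨F', htr'⟩ := hE'
  rw [srcSet_snoc, srcSet_snoc] at F' htr'
  have hAlt : ∀ x ∈ srcSet a, x < i := by
    intro x hx; obtain ⟨j, rfl⟩ := mem_srcSet.mp hx; exact hai j
  have hBgt : ∀ x ∈ srcSet b, i + 1 < x := by
    intro x hx; obtain ⟨j, rfl⟩ := mem_srcSet.mp hx; exact hbi j
  have hi1B : (i + 1) ∉ srcSet b := fun h => by have := hBgt _ h; omega
  have hdisj : Disjoint (srcSet a) (srcSet b) := by
    rw [Finset.disjoint_left]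
    intro x hx hx'
    have := hAlt x hx; have := hBgt x hx'; omega
  have hbeg_i : (beginsAt E' i).card = 1 := F'.source_out i (Finset.mem_insert_self _ _)
  have hend_i : endsAt E' i = ∅ := F'.source_in i (Finset.mem_insert_self _ _)
  have hend_i1 : (endsAt E' (i + 1)).card = 1 := F'.sink_in _ (Finset.mem_insert_self _ _)
  have hbeg_i1 : beginsAt E' (i + 1) = ∅ := F'.sink_out _ (Finset.mem_insert_self _ _)
  have hbs : beginsAt E' i = {(i, i + 1)} :=
    eq_singleton_of_card_one hbeg_i (mem_beginsAt.mpr ⟨hmem, rfl⟩)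
  have hes : endsAt E' (i + 1) = {(i, i + 1)} :=
    eq_singleton_of_card_one hend_i1 (mem_endsAt.mpr ⟨hmem, rfl⟩)
  set Γ := E'.erase (i, i + 1) with hΓdef
  have hbegΓ : ∀ r, r ≠ i → beginsAt Γ r = beginsAt E' r := by
    intro r hr
    rw [hΓdef, beginsAt_erase]
    apply Finset.erase_eq_of_notMem
    rw [mem_beginsAt]; rintro ⟨-, h⟩; exact hr h.symm
  have hbegΓi : beginsAt Γ i = ∅ := by
    rw [hΓdef, beginsAt_erase, hbs, Finset.erase_singleton]
  have hendΓ : ∀ r, r ≠ i + 1 → endsAt Γ r = endsAt E' r := by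
    intro r hr
    rw [hΓdef, endsAt_erase]
    apply Finset.erase_eq_of_notMem
    rw [mem_endsAt]; rintro ⟨-, h⟩; exact hr h.symm
  have hendΓi1 : endsAt Γ (i + 1) = ∅ := by
    rw [hΓdef, endsAt_erase, hes, Finset.erase_singleton]
  have hbegΓi1 : beginsAt Γ (i + 1) = ∅ := by rw [hbegΓ _ (by omega), hbeg_i1]
  have hendΓi : endsAt Γ i = ∅ := by rw [hendΓ _ (by omega), hend_i]
  have hflow : IsFlow Γ (srcSet a) (srcSet b) := by
    refine ⟨?_, hdisj, ?_, ?_, ?_, ?_, ?_⟩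
    · intro e he; exact F'.edge_lt e (Finset.mem_of_mem_erase he)
    · intro x hx
      rw [hbegΓ x (by have := hAlt x hx; omega)]
      exact F'.source_out x (Finset.mem_insert_of_mem hx)
    · intro x hx
      rw [hendΓ x (by have := hAlt x hx; omega)]
      exact F'.source_in x (Finset.mem_insert_of_mem hx)
    · intro x hx
      rw [hendΓ x (by have := hBgt x hx; omega)]
      exact F'.sink_in x (Finset.mem_insert_of_mem hx)
    · intro x hx
      rw [hbegΓ x (by have := hBgt x hx; omega)]
      exact F'.sink_out x (Finset.mem_insert_of_mem hx)
    · intro r hrA hrB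
      by_cases hri : r = i
      · subst hri; exact Or.inl ⟨hbegΓi, hendΓi⟩
      by_cases hri1 : r = i + 1
      · subst hri1; exact Or.inl ⟨hbegΓi1, hendΓi1⟩
      rw [hbegΓ r hri, hendΓ r hri1]
      exact F'.transit r (by simp [Finset.mem_insert, hri, hrA])
        (by simp [Finset.mem_insert, hri1, hrB])
  have hbound : ∀ r, IsTransitPoint Γ (srcSet a) (srcSet b) r → r ≤ i := by
    intro r hr
    rw [isTransit_iff] at hr
    obtain ⟨⟨e, he, hor⟩, hrA, hrB⟩ := hr
    by_cases hri : r = i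
    · omega
    by_cases hri1 : r = i + 1
    · subst hri1
      rcases hor with h | h
      · exact absurd (mem_beginsAt.mpr ⟨he, h⟩) (by rw [hbegΓi1]; exact Finset.notMem_empty _)
      · exact absurd (mem_endsAt.mpr ⟨he, h⟩) (by rw [hendΓi1]; exact Finset.notMem_empty _)
    · apply htr' r
      rw [isTransit_iff]
      exact ⟨⟨e, Finset.mem_of_mem_erase he, hor⟩,
        by simp [Finset.mem_insert, hri, hrA], by simp [Finset.mem_insert, hri1, hrB]⟩
  refine ⟨⟨hflow, hbound⟩, ⟨hi1B, fun e he h => ?_⟩, ?_⟩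
  · exact absurd (mem_beginsAt.mpr ⟨he, h⟩) (by rw [hbegΓi]; exact Finset.notMem_empty _)
  · show insert (i, i + 1) Γ = E'
    exact Finset.insert_erase hmem

lemma exists_M1 {q : ℕ} (i : ℤ) (a b : Fin q → ℤ)
    (hai : ∀ j, a j < i) (hbi : ∀ j, i + 1 < b j) (E' : FlowGraph)
    (hE' : InF i (Fin.snoc a i) (Fin.snoc b (i + 1)) E')
    (hmem : (i, i + 1) ∉ E') :
    InF i a b (E'.image (fun e => if e.2 = i + 1 then (e.1, i) else e)) ∧
    MDefined (srcSet a) (srcSet b) i (E'.image (fun e => if e.2 = i + 1 then (e.1, i) else e)) .M1 ∧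
    MApply i (E'.image (fun e => if e.2 = i + 1 then (e.1, i) else e)) .M1 = E' := by
  obtain ⟨F', htr'⟩ := hE'
  rw [srcSet_snoc, srcSet_snoc] at F' htr'
  have hAlt : ∀ x ∈ srcSet a, x < i := by
    intro x hx; obtain ⟨j, rfl⟩ := mem_srcSet.mp hx; exact hai j
  have hBgt : ∀ x ∈ srcSet b, i + 1 < x := by
    intro x hx; obtain ⟨j, rfl⟩ := mem_srcSet.mp hx; exact hbi j
  have hiA : i ∉ srcSet a := fun h => by have := hAlt _ h; omega
  have hiB : i ∉ srcSet b := fun h => by have := hBgt _ h; omega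
  have hi1B : (i + 1) ∉ srcSet b := fun h => by have := hBgt _ h; omega
  have hdisj : Disjoint (srcSet a) (srcSet b) := by
    rw [Finset.disjoint_left]
    intro x hx hx'
    have := hAlt x hx; have := hBgt x hx'; omega
  have hbeg_i : (beginsAt E' i).card = 1 := F'.source_out i (Finset.mem_insert_self _ _)
  have hend_i : endsAt E' i = ∅ := F'.source_in i (Finset.mem_insert_self _ _)
  have hend_i1 : (endsAt E' (i + 1)).card = 1 := F'.sink_in _ (Finset.mem_insert_self _ _)
  have hbeg_i1 : beginsAt E' (i + 1) = ∅ := F'.sink_out _ (Finset.mem_insert_self _ _)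
  obtain ⟨e1, hes0⟩ := Finset.card_eq_one.mp hend_i1
  have he1 : e1 ∈ endsAt E' (i + 1) := by rw [hes0]; exact Finset.mem_singleton_self e1
  obtain ⟨s, t1⟩ := e1
  obtain ⟨he1E, he1snd⟩ := mem_endsAt.mp he1
  have ht1 : t1 = i + 1 := he1snd
  subst ht1
  have hes : endsAt E' (i + 1) = {(s, i + 1)} := hes0
  have hs_lt : s < i + 1 := F'.edge_lt _ he1E
  have hs_ne : s ≠ i := by rintro rfl; exact hmem he1E
  have hs_lt' : s < i := by omega
  have hsb : (s, i + 1) ∈ beginsAt E' s := mem_beginsAt.mpr ⟨he1E, rfl⟩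
  have hbeg_s_card : (beginsAt E' s).card = 1 := by
    by_cases hsA : s ∈ srcSet a
    · exact F'.source_out s (Finset.mem_insert_of_mem hsA)
    · rcases F'.transit s (by simp [Finset.mem_insert, hs_ne, hsA])
        (by
          intro h
          rcases Finset.mem_insert.mp h with h | h
          · omega
          · have := hBgt _ h; omega) with ⟨h, -⟩ | ⟨h, -⟩
      · exact absurd hsb (by rw [h]; exact Finset.notMem_empty _)
      · exact h
  have hbeg_s : beginsAt E' s = {(s, i + 1)} := eq_singleton_of_card_one hbeg_s_card hsb
  set Γ := E'.image (fun e => if e.2 = i + 1 then (e.1, i) else e) with hΓdef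
  have himg : Γ = insert (s, i) (E'.erase (s, i + 1)) := by
    ext e
    simp only [hΓdef, Finset.mem_image, Finset.mem_insert, Finset.mem_erase]
    constructor
    · rintro ⟨x, hx, rfl⟩
      by_cases hx2 : x.2 = i + 1
      · have hxm : x ∈ endsAt E' (i + 1) := mem_endsAt.mpr ⟨hx, hx2⟩
        rw [hes, Finset.mem_singleton] at hxm
        subst hxm
        left; rw [if_pos rfl]
      · right
        rw [if_neg hx2]
        exact ⟨fun h => hx2 (by rw [h]), hx⟩
    · rintro (rfl | ⟨hne, he⟩)
      · exact ⟨(s, i + 1), he1E, by rw [if_pos rfl]⟩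
      · refine ⟨e, he, ?_⟩
        have h2 : e.2 ≠ i + 1 := by
          intro h
          have : e ∈ endsAt E' (i + 1) := mem_endsAt.mpr ⟨he, h⟩
          rw [hes, Finset.mem_singleton] at this
          exact hne this
        rw [if_neg h2]
  have hbegΓ : ∀ r, r ≠ s → beginsAt Γ r = beginsAt E' r := by
    intro r hr
    rw [himg, beginsAt_insert, beginsAt_erase, if_neg (fun h => hr (h.symm : r = s))]
    apply Finset.erase_eq_of_notMem
    rw [mem_beginsAt]; rintro ⟨-, h⟩; exact hr h.symm
  have hbegΓs : beginsAt Γ s = {(s, i)} := by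
    rw [himg, beginsAt_insert, if_pos rfl, beginsAt_erase, hbeg_s, Finset.erase_singleton]
    simp
  have hendΓ : ∀ r, r ≠ i → r ≠ i + 1 → endsAt Γ r = endsAt E' r := by
    intro r hri hri1
    rw [himg, endsAt_insert, endsAt_erase, if_neg (fun h => hri (h.symm : r = i))]
    apply Finset.erase_eq_of_notMem
    rw [mem_endsAt]; rintro ⟨-, h⟩; exact hri1 h.symm
  have hendΓi : endsAt Γ i = {(s, i)} := by
    rw [himg, endsAt_insert, if_pos rfl, endsAt_erase, hend_i]
    simp
  have hendΓi1 : endsAt Γ (i + 1) = ∅ := by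
    rw [himg, endsAt_insert, if_neg (by omega : ¬((s, i).2 = i + 1)), endsAt_erase, hes,
      Finset.erase_singleton]
  have hbegΓi : beginsAt Γ i = beginsAt E' i := hbegΓ i (by omega)
  have hbegΓi1 : beginsAt Γ (i + 1) = ∅ := by rw [hbegΓ _ (by omega), hbeg_i1]
  have hflow : IsFlow Γ (srcSet a) (srcSet b) := by
    refine ⟨?_, hdisj, ?_, ?_, ?_, ?_, ?_⟩
    · intro e he
      rw [himg, Finset.mem_insert] at he
      rcases he with rfl | he
      · exact hs_lt'
      · exact F'.edge_lt e (Finset.mem_of_mem_erase he)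
    · intro x hx
      by_cases hxs : x = s
      · subst hxs; rw [hbegΓs]; exact Finset.card_singleton _
      · rw [hbegΓ x hxs]; exact F'.source_out x (Finset.mem_insert_of_mem hx)
    · intro x hx
      have := hAlt x hx
      rw [hendΓ x (by omega) (by omega)]
      exact F'.source_in x (Finset.mem_insert_of_mem hx)
    · intro x hx
      have := hBgt x hx
      rw [hendΓ x (by omega) (by omega)]
      exact F'.sink_in x (Finset.mem_insert_of_mem hx)
    · intro x hx
      have := hBgt x hx
      rw [hbegΓ x (by omega)]
      exact F'.sink_out x (Finset.mem_insert_of_mem hx)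
    · intro r hrA hrB
      by_cases hri : r = i
      · subst hri
        right
        exact ⟨by rw [hbegΓi]; exact hbeg_i, by rw [hendΓi]; exact Finset.card_singleton _⟩
      by_cases hri1 : r = i + 1
      · subst hri1; exact Or.inl ⟨hbegΓi1, hendΓi1⟩
      by_cases hrs : r = s
      · subst hrs
        right
        refine ⟨by rw [hbegΓs]; exact Finset.card_singleton _, ?_⟩
        rw [hendΓ r hri hri1]
        rcases F'.transit r (by simp [Finset.mem_insert, hs_ne, hrA])
          (by simp [Finset.mem_insert, hri1, hrB]) with ⟨h, -⟩ | ⟨-, h⟩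
        · exact absurd hsb (by rw [h]; exact Finset.notMem_empty _)
        · exact h
      · rw [hbegΓ r hrs, hendΓ r hri hri1]
        exact F'.transit r (by simp [Finset.mem_insert, hri, hrA])
          (by simp [Finset.mem_insert, hri1, hrB])
  have hbound : ∀ r, IsTransitPoint Γ (srcSet a) (srcSet b) r → r ≤ i := by
    intro r hr
    rw [isTransit_iff] at hr
    obtain ⟨⟨e, he, hor⟩, hrA, hrB⟩ := hr
    by_contra hgt
    push_neg at hgt
    have hri : r ≠ i := by omega
    have hrs : r ≠ s := by omega
    by_cases hri1 : r = i + 1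
    · subst hri1
      rcases hor with h | h
      · exact absurd (mem_beginsAt.mpr ⟨he, h⟩) (by rw [hbegΓi1]; exact Finset.notMem_empty _)
      · exact absurd (mem_endsAt.mpr ⟨he, h⟩) (by rw [hendΓi1]; exact Finset.notMem_empty _)
    · have heE : e ∈ E' := by
        rw [himg, Finset.mem_insert] at he
        rcases he with rfl | he
        · exfalso
          rcases hor with h | h
          · exact hrs h.symm
          · exact hri h.symm
        · exact Finset.mem_of_mem_erase he
      have : r ≤ i := htr' r (by
        rw [isTransit_iff]
        exact ⟨⟨e, heE, hor⟩, by simp [Finset.mem_insert, hri, hrA],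
          by simp [Finset.mem_insert, hri1, hrB]⟩)
      omega
  have hdef : MDefined (srcSet a) (srcSet b) i Γ .M1 := by
    refine ⟨hi1B, ?_⟩
    rw [isTransit_iff]
    exact ⟨⟨(s, i), by rw [himg]; exact Finset.mem_insert_self _ _, Or.inr rfl⟩, hiA, hiB⟩
  have happ : MApply i Γ .M1 = E' := by
    show Γ.image _ = E'
    rw [himg, Finset.image_insert]
    have h0 : ∀ e ∈ E'.erase (s, i + 1), (if e.2 = i then (e.1, i + 1) else e) = id e := by
      intro e he
      have heE := Finset.mem_of_mem_erase he
      have h2 : e.2 ≠ i := by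
        intro h
        exact absurd (mem_endsAt.mpr ⟨heE, h⟩) (by rw [hend_i]; exact Finset.notMem_empty _)
      rw [if_neg h2]; rfl
    rw [Finset.image_congr h0, Finset.image_id]
    have h3 : (if ((s, i) : ℤ × ℤ).2 = i then ((s : ℤ), i + 1) else (s, i)) = (s, i + 1) :=
      if_pos rfl
    rw [h3]
    exact Finset.insert_erase he1E
  exact ⟨⟨hflow, hbound⟩, hdef, happ⟩

end Exists

/-- Corollary 21: suppose `a_q < i` and `i + 1 < b_q` (whenever `q ≥ 1`). For
every flow `Γ' ∈ 𝓕_i(a_1,…,a_q, i; b_1,…,b_q, i + 1)` there is a unique pair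
`(O, Γ)` with `O ∈ {M_1, M_2}` and `Γ ∈ 𝓕_i(a_1,…,a_q; b_1,…,b_q)` such that
`O(Γ)` is well-defined and `O(Γ) = Γ'`. -/
theorem statement9 {q : ℕ} (i : ℤ) (a b : Fin q → ℤ)
    (ha : StrictMono a) (hb : StrictAnti b)
    (hai : ∀ j, a j < i) (hbi : ∀ j, i + 1 < b j)
    (E' : FlowGraph)
    (hE' : InF i (Fin.snoc a i) (Fin.snoc b (i + 1)) E') :
    ∃! p : MOp × FlowGraph,
      InF i a b p.2 ∧
      MDefined (srcSet a) (srcSet b) i p.2 p.1 ∧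
      MApply i p.2 p.1 = E' := by
  by_cases hmem : (i, i + 1) ∈ E'
  · obtain ⟨h1, h2, h3⟩ := exists_M2 i a b hai hbi E' hE' hmem
    refine ⟨(MOp.M2, E'.erase (i, i + 1)), ⟨h1, h2, h3⟩, ?_⟩
    rintro ⟨O, Γ⟩ ⟨hΓ, hdef, happ⟩
    cases O with
    | M1 => exact absurd hmem (M1_inv i a b hai hbi E' Γ hΓ hdef happ).1
    | M2 =>
      obtain ⟨-, h⟩ := M2_inv i a b E' Γ hdef happ
      rw [Prod.mk.injEq]
      exact ⟨rfl, h.symm⟩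
  · obtain ⟨h1, h2, h3⟩ := exists_M1 i a b hai hbi E' hE' hmem
    refine ⟨(MOp.M1, _), ⟨h1, h2, h3⟩, ?_⟩
    rintro ⟨O, Γ⟩ ⟨hΓ, hdef, happ⟩
    cases O with
    | M2 => exact absurd (M2_inv i a b E' Γ hdef happ).1 hmem
    | M1 =>
      obtain ⟨-, h⟩ := M1_inv i a b hai hbi E' Γ hΓ hdef happ
      rw [Prod.mk.injEq]
      exact ⟨rfl, h.symm⟩
end

section
/- Suppose q ≥ 1 and b_q + 1 ∉ {b_1,…,b_{q−1}}. Then for any flow Γ' ∈ 𝓕_i(a_1,…,a_q; b_1,…,b_{q−1}, b_q + 1), there exists a unique flow Γ ∈ 𝓕_i(a_1,…,a_q; b_1,…,b_q) such that R(Γ) = Γ'. -/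
open Finset

/-- The operation `R` for last sink `c = b_q`: replace the edge `(s, c)` by
`(s, c + 1)`. -/
def Rg (c : ℤ) (E : FlowGraph) : FlowGraph :=
  E.image (fun e => if e.2 = c then (e.1, c + 1) else e)


/-- The inverse direction map: redirect edges ending at `c+1` to end at `c`. -/
def gm (c : ℤ) : ℤ × ℤ → ℤ × ℤ := fun e => if e.2 = c + 1 then (e.1, c) else e

lemma gm_fst (c : ℤ) (e : ℤ × ℤ) : (gm c e).1 = e.1 := by
  unfold gm; split <;> rfl

lemma gm_injOn {c : ℤ} {E' : FlowGraph} (hc : ∀ e ∈ E', e.2 ≠ c) :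
    Set.InjOn (gm c) E' := by
  intro e1 h1 e2 h2 h
  unfold gm at h
  split_ifs at h with h1' h2' h2'
  · rw [Prod.mk.injEq] at h
    have := h.1
    rcases e1 with ⟨x1,y1⟩; rcases e2 with ⟨x2,y2⟩
    simp_all
  · exact absurd (congrArg Prod.snd h).symm (hc e2 h2)
  · exact absurd (congrArg Prod.snd h) (hc e1 h1)
  · exact h

lemma begins_gm (c : ℤ) (E' : FlowGraph) (r : ℤ) :
    beginsAt (E'.image (gm c)) r = (beginsAt E' r).image (gm c) := by
  unfold beginsAt
  rw [Finset.filter_image]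
  congr 1
  apply Finset.filter_congr
  intro e _
  simp [gm_fst]

lemma ends_gm_ne {c : ℤ} (E' : FlowGraph) {r : ℤ} (h1 : r ≠ c) (h2 : r ≠ c + 1) :
    endsAt (E'.image (gm c)) r = endsAt E' r := by
  unfold endsAt
  rw [Finset.filter_image]
  have : E'.filter (fun e => (gm c e).2 = r) = E'.filter (fun e => e.2 = r) := by
    apply Finset.filter_congr
    intro e _
    unfold gm
    split
    · simp_all
      omega
    · exact Iff.rfl
  rw [this]
  apply Finset.image_congr ?_ |>.trans (Finset.image_id)
  intro e he
  simp only [Finset.coe_filter, Set.mem_setOf_eq] at he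
  unfold gm
  simp [he.2, h2, fun h => h2 (he.2 ▸ h)]

lemma ends_gm_c {c : ℤ} {E' : FlowGraph} (hc : ∀ e ∈ E', e.2 ≠ c) :
    endsAt (E'.image (gm c)) c = (endsAt E' (c + 1)).image (gm c) := by
  unfold endsAt
  rw [Finset.filter_image]
  congr 1
  apply Finset.filter_congr
  intro e he
  unfold gm
  split
  · rename_i h
    simpa using h
  · rename_i h
    have h2 := hc e he
    show e.2 = c ↔ e.2 = c + 1
    omega

lemma ends_gm_c1 (c : ℤ) (E' : FlowGraph) :
    endsAt (E'.image (gm c)) (c + 1) = ∅ := by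
  unfold endsAt
  rw [Finset.filter_image]
  have h : E'.filter (fun e => (gm c e).2 = c + 1) = ∅ := by
    rw [Finset.filter_eq_empty_iff]
    intro e _
    unfold gm
    split
    · show ¬ c = c + 1
      omega
    · rename_i h
      exact h
  rw [h, Finset.image_empty]

lemma gm_comp1 {c : ℤ} {e : ℤ × ℤ} (h : e.2 ≠ c) :
    (fun e : ℤ × ℤ => if e.2 = c then (e.1, c + 1) else e) (gm c e) = e := by
  rcases e with ⟨x, y⟩
  simp only [gm]
  by_cases hy : y = c + 1
  · simp [hy]
  · rw [if_neg hy, if_neg h]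

lemma gm_comp2 {c : ℤ} {e : ℤ × ℤ} (h : e.2 ≠ c + 1) :
    gm c ((fun e : ℤ × ℤ => if e.2 = c then (e.1, c + 1) else e) e) = e := by
  rcases e with ⟨x, y⟩
  simp only [gm]
  by_cases hy : y = c
  · simp [hy]
  · rw [if_neg hy, if_neg h]

lemma card_begins_gm {c : ℤ} {E' : FlowGraph} (hc : ∀ e ∈ E', e.2 ≠ c) (r : ℤ) :
    (beginsAt (E'.image (gm c)) r).card = (beginsAt E' r).card := by
  rw [begins_gm]
  apply Finset.card_image_of_injOn
  apply (gm_injOn hc).mono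
  intro e he
  simp only [beginsAt, Finset.coe_filter, Set.mem_setOf_eq] at he
  exact he.1

lemma card_ends_gm_c {c : ℤ} {E' : FlowGraph} (hc : ∀ e ∈ E', e.2 ≠ c) :
    (endsAt (E'.image (gm c)) c).card = (endsAt E' (c + 1)).card := by
  rw [ends_gm_c hc]
  apply Finset.card_image_of_injOn
  apply (gm_injOn hc).mono
  intro e he
  simp only [endsAt, Finset.coe_filter, Set.mem_setOf_eq] at he
  exact he.1

/-- Corollary 23: suppose `q ≥ 1` and `b_q + 1 ∉ {b_1,…,b_{q-1}}`. For every
flow `Γ' ∈ 𝓕_i(a_1,…,a_q; b_1,…,b_{q-1}, b_q + 1)` there is a unique flow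
`Γ ∈ 𝓕_i(a_1,…,a_q; b_1,…,b_q)` such that `R(Γ) = Γ'`. -/
theorem statement10 {q : ℕ} (i : ℤ) (a b : Fin (q + 1) → ℤ)
    (ha : StrictMono a) (hb : StrictAnti b)
    (hai : ∀ j, a j ≤ i) (hbi : ∀ j, i < b j)
    (hnew : ∀ j, b j ≠ b (Fin.last q) + 1)
    (E' : FlowGraph)
    (hE' : InF i a (Function.update b (Fin.last q) (b (Fin.last q) + 1)) E') :
    ∃! E : FlowGraph, InF i a b E ∧ Rg (b (Fin.last q)) E = E' := by
  obtain ⟨flow', bound'⟩ := hE'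
  set c := b (Fin.last q) with hc_eq
  set b' := Function.update b (Fin.last q) (c + 1) with hb'_eq
  set A := srcSet a with hA_eq
  set B := srcSet b with hB_eq
  set B' := srcSet b' with hB'_eq
  have hic : i < c := hbi _
  -- membership facts
  have hmemA : ∀ r : ℤ, r ∈ A ↔ ∃ j, a j = r := by
    intro r; simp [hA_eq, srcSet]
  have hmemB : ∀ r : ℤ, r ∈ B ↔ ∃ j, b j = r := by
    intro r; simp [hB_eq, srcSet]
  have hmemB' : ∀ r : ℤ, r ∈ B' ↔ ∃ j, b' j = r := by
    intro r; simp [hB'_eq, srcSet]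
  have hAle : ∀ r ∈ A, r ≤ i := by
    intro r hr; obtain ⟨j, rfl⟩ := (hmemA r).1 hr; exact hai j
  have hble : ∀ j, c ≤ b j := fun j => hb.antitone (Fin.le_last j)
  have hbc : ∀ j, b j = c → j = Fin.last q := fun j h => hb.injective h
  have hcA : c ∉ A := fun h => absurd (hAle c h) (not_le.2 hic)
  have hc1A : c + 1 ∉ A := fun h => by have := hAle _ h; omega
  have hcB : c ∈ B := (hmemB c).2 ⟨Fin.last q, rfl⟩
  have hc1B : c + 1 ∉ B := by
    intro h; obtain ⟨j, hj⟩ := (hmemB _).1 h; exact hnew j hj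
  have hcB' : c ∉ B' := by
    intro h
    obtain ⟨j, hj⟩ := (hmemB' c).1 h
    by_cases hjl : j = Fin.last q
    · subst hjl; rw [hb'_eq, Function.update_self] at hj; omega
    · rw [hb'_eq, Function.update_of_ne hjl] at hj
      exact hjl (hbc j hj)
  have hc1B' : c + 1 ∈ B' := (hmemB' _).2 ⟨Fin.last q, by rw [hb'_eq, Function.update_self]⟩
  have hBB' : ∀ r ∈ B, r ≠ c → r ∈ B' := by
    intro r hr hrc
    obtain ⟨j, hj⟩ := (hmemB r).1 hr
    have hjl : j ≠ Fin.last q := by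
      intro hh; subst hh
      rw [← hc_eq] at hj
      exact (hrc hj.symm).elim
    exact (hmemB' r).2 ⟨j, by rw [hb'_eq, Function.update_of_ne hjl]; exact hj⟩
  have hB'B : ∀ r ∈ B', r ≠ c + 1 → r ∈ B := by
    intro r hr hrc
    obtain ⟨j, hj⟩ := (hmemB' r).1 hr
    by_cases hjl : j = Fin.last q
    · subst hjl; rw [hb'_eq, Function.update_self] at hj; exact (hrc hj.symm).elim
    · rw [hb'_eq, Function.update_of_ne hjl] at hj
      exact (hmemB r).2 ⟨j, hj⟩
  have hB'gt : ∀ r ∈ B', i < r := by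
    intro r hr
    obtain ⟨j, hj⟩ := (hmemB' r).1 hr
    by_cases hjl : j = Fin.last q
    · subst hjl; rw [hb'_eq, Function.update_self] at hj; omega
    · rw [hb'_eq, Function.update_of_ne hjl] at hj; exact hj ▸ hbi j
  have hBgt : ∀ r ∈ B, i < r := by
    intro r hr; obtain ⟨j, rfl⟩ := (hmemB r).1 hr; exact hbi j
  -- no edge of E' touches c
  have hcE' : beginsAt E' c = ∅ ∧ endsAt E' c = ∅ := by
    rcases flow'.transit c hcA hcB' with h | h
    · exact h
    · exfalso
      obtain ⟨e, he⟩ := Finset.card_eq_one.1 h.2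
      have heE : e ∈ endsAt E' c := he ▸ Finset.mem_singleton_self e
      rw [endsAt, Finset.mem_filter] at heE
      have : c ∈ transitSet E' A B' := by
        rw [transitSet, Finset.mem_sdiff, Finset.mem_union, Finset.mem_union]
        refine ⟨Or.inr ?_, ?_⟩
        · exact Finset.mem_image.2 ⟨e, heE.1, heE.2⟩
        · rintro (h' | h') <;> [exact hcA h'; exact hcB' h']
      exact absurd (bound' c this) (not_le.2 hic)
  have hc' : ∀ e ∈ E', e.2 ≠ c := by
    intro e he h
    have : e ∈ endsAt E' c := Finset.mem_filter.2 ⟨he, h⟩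
    rw [hcE'.2] at this; exact absurd this (Finset.notMem_empty e)
  have hcfst : ∀ e ∈ E', e.1 ≠ c := by
    intro e he h
    have : e ∈ beginsAt E' c := Finset.mem_filter.2 ⟨he, h⟩
    rw [hcE'.1] at this; exact absurd this (Finset.notMem_empty e)
  -- the candidate flow
  set E : FlowGraph := E'.image (gm c) with hE_eq
  have hRgE : Rg c E = E' := by
    rw [Rg, hE_eq, Finset.image_image]
    exact (Finset.image_congr (fun e he => gm_comp1 (hc' e he))).trans Finset.image_id
  -- basic transfers
  have hbeg : ∀ r, beginsAt E r = (beginsAt E' r).image (gm c) := fun r => begins_gm c E' r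
  have hbeg_card : ∀ r, (beginsAt E r).card = (beginsAt E' r).card := fun r => card_begins_gm hc' r
  have hend_ne : ∀ r, r ≠ c → r ≠ c + 1 → endsAt E r = endsAt E' r := fun r h1 h2 => ends_gm_ne E' h1 h2
  have hend_c : (endsAt E c).card = (endsAt E' (c + 1)).card := card_ends_gm_c hc'
  have hend_c1 : endsAt E (c + 1) = ∅ := ends_gm_c1 c E'
  have hbegE_c1 : beginsAt E (c + 1) = ∅ := by
    rw [hbeg, flow'.sink_out _ hc1B', Finset.image_empty]
  -- IsFlow E A B
  have hflow : IsFlow E A B := by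
    constructor
    · -- edge_lt
      intro e he
      rw [hE_eq, Finset.mem_image] at he
      obtain ⟨e', he', rfl⟩ := he
      have hlt := flow'.edge_lt e' he'
      unfold gm
      split
      · rename_i h; have := hcfst e' he'; simp only; omega
      · exact hlt
    · -- disjAB
      rw [Finset.disjoint_left]
      intro r hr hrB
      exact absurd (hBgt r hrB) (not_lt.2 (hAle r hr))
    · -- source_out
      intro x hx
      rw [hbeg_card]; exact flow'.source_out x hx
    · -- source_in
      intro x hx
      have h1 : x ≠ c := fun h => hcA (h ▸ hx)
      have h2 : x ≠ c + 1 := fun h => hc1A (h ▸ hx)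
      rw [hend_ne x h1 h2]; exact flow'.source_in x hx
    · -- sink_in
      intro x hx
      by_cases hxc : x = c
      · subst hxc; rw [hend_c]; exact flow'.sink_in _ hc1B'
      · have h2 : x ≠ c + 1 := fun h => hc1B (h ▸ hx)
        rw [hend_ne x hxc h2]
        exact flow'.sink_in x (hBB' x hx hxc)
    · -- sink_out
      intro x hx
      by_cases hxc : x = c
      · subst hxc; rw [hbeg, hcE'.1, Finset.image_empty]
      · rw [hbeg, flow'.sink_out x (hBB' x hx hxc), Finset.image_empty]
    · -- transit
      intro r hrA hrB
      by_cases hrc1 : r = c + 1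
      · subst hrc1; exact Or.inl ⟨hbegE_c1, hend_c1⟩
      · have hrc : r ≠ c := fun h => hrB (h ▸ hcB)
        have hrB' : r ∉ B' := fun h => hrB (hB'B r h hrc1)
        rcases flow'.transit r hrA hrB' with h | h
        · exact Or.inl ⟨by rw [hbeg, h.1, Finset.image_empty], by rw [hend_ne r hrc hrc1]; exact h.2⟩
        · exact Or.inr ⟨by rw [hbeg_card]; exact h.1, by rw [hend_ne r hrc hrc1]; exact h.2⟩
  -- transit bound for E
  have hbound : ∀ r : ℤ, IsTransitPoint E A B r → r ≤ i := by
    intro r hr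
    rw [IsTransitPoint, transitSet, Finset.mem_sdiff, Finset.mem_union, Finset.mem_union] at hr
    obtain ⟨hrv, hrAB⟩ := hr
    have hrA : r ∉ A := fun h => hrAB (Or.inl h)
    have hrB : r ∉ B := fun h => hrAB (Or.inr h)
    have hrc : r ≠ c := fun h => hrB (h ▸ hcB)
    have hrc1 : r ≠ c + 1 := by
      intro h
      subst h
      rcases hrv with hv | hv
      · obtain ⟨e, heE, he1⟩ := Finset.mem_image.1 hv
        have : e ∈ beginsAt E (c + 1) := Finset.mem_filter.2 ⟨heE, he1⟩
        rw [hbegE_c1] at this; exact Finset.notMem_empty e this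
      · obtain ⟨e, heE, he2⟩ := Finset.mem_image.1 hv
        have : e ∈ endsAt E (c + 1) := Finset.mem_filter.2 ⟨heE, he2⟩
        rw [hend_c1] at this; exact Finset.notMem_empty e this
    apply bound' r
    rw [IsTransitPoint, transitSet, Finset.mem_sdiff, Finset.mem_union, Finset.mem_union]
    constructor
    · rcases hrv with hv | hv
      · left
        obtain ⟨e, heE, he1⟩ := Finset.mem_image.1 hv
        rw [hE_eq, Finset.mem_image] at heE
        obtain ⟨e', he', rfl⟩ := heE
        exact Finset.mem_image.2 ⟨e', he', by rw [← gm_fst c e']; exact he1⟩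
      · right
        obtain ⟨e, heE, he2⟩ := Finset.mem_image.1 hv
        have : e ∈ endsAt E r := Finset.mem_filter.2 ⟨heE, he2⟩
        rw [hend_ne r hrc hrc1] at this
        rw [endsAt, Finset.mem_filter] at this
        exact Finset.mem_image.2 ⟨e, this.1, this.2⟩
    · rintro (h' | h')
      · exact hrA h'
      · exact hrB ((hB'B r h' hrc1))
  -- uniqueness helper : any valid preimage has no edge ending at c+1
  have huniq : ∀ E₂ : FlowGraph, (InF i a b E₂ ∧ Rg c E₂ = E') → E₂ = E := by
    rintro E₂ ⟨⟨flow₂, bound₂⟩, hRg₂⟩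
    have hc1e : ∀ e ∈ E₂, e.2 ≠ c + 1 := by
      intro e he h
      have hend2 : endsAt E₂ (c + 1) ≠ ∅ := by
        intro hx
        have : e ∈ endsAt E₂ (c + 1) := Finset.mem_filter.2 ⟨he, h⟩
        rw [hx] at this; exact Finset.notMem_empty e this
      rcases flow₂.transit (c + 1) hc1A hc1B with h' | h'
      · exact hend2 h'.2
      · have : c + 1 ∈ transitSet E₂ A B := by
          rw [transitSet, Finset.mem_sdiff, Finset.mem_union, Finset.mem_union]
          refine ⟨Or.inr (Finset.mem_image.2 ⟨e, he, h⟩), ?_⟩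
          rintro (h'' | h'') <;> [exact hc1A h''; exact hc1B h'']
        have := bound₂ (c + 1) this
        omega
    rw [hE_eq, ← hRg₂, Rg, Finset.image_image]
    exact ((Finset.image_congr (fun e he => gm_comp2 (hc1e e he))).trans Finset.image_id).symm
  exact ⟨E, ⟨⟨hflow, hbound⟩, hRgE⟩, huniq⟩
end

section
/- Let Γ be a nonempty flow with sources 𝐚_1,…,𝐚_q and sinks 𝐛_1,…,𝐛_q, and let (ŝ, t̂) be the edge of Γ such that t̂ > t for every other edge (s, t) of Γ. Then t̂ = 𝐛_j for some j = 1,…,q, and the graph Γ̃ obtained from Γ by removing the edge (ŝ, t̂) is again a flow, with: (i) sources 𝐚_1,…,𝐚_q and sinks 𝐛_1,…,𝐛_{j−1}, ŝ, 𝐛_{j+1},…,𝐛_q if ŝ ∉ {𝐚_1,…,𝐚_q}; (ii) sources 𝐚_1,…,𝐚_{k−1}, 𝐚_{k+1},…,𝐚_q and sinks 𝐛_1,…,𝐛_{j−1}, 𝐛_{j+1},…,𝐛_q if ŝ = 𝐚_k. -/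
open Finset

/-- Proposition 33: let `Γ` be a nonempty flow with pairwise distinct sources
`a 1, …, a q` and sinks `b 1, …, b q`, and let `(ŝ, t̂)` be the edge of `Γ`
whose end is strictly greater than the end of every other edge. Then `t̂` is a
sink, and removing the edge `(ŝ, t̂)` yields a flow with:
(i) the same sources, and sinks obtained by replacing `t̂` with `ŝ`, in case
`ŝ` is not a source; (ii) sources without `ŝ` and sinks without `t̂`, in case
`ŝ` is a source. -/
theorem statement11 {q : ℕ} (a b : Fin q → ℤ)
    (ha : Function.Injective a) (hb : Function.Injective b)
    (hab : ∀ j k : Fin q, a j ≠ b k)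
    (E : FlowGraph) (hE : IsFlow E (srcSet a) (srcSet b))
    (sh th : ℤ) (hmem : (sh, th) ∈ E)
    (hmax : ∀ e ∈ E, e ≠ (sh, th) → e.2 < th) :
    (∃ j : Fin q, th = b j) ∧
    ((∀ k, sh ≠ a k) →
      IsFlow (E.erase (sh, th)) (srcSet a) (insert sh ((srcSet b).erase th))) ∧
    ((∃ k, sh = a k) →
      IsFlow (E.erase (sh, th)) ((srcSet a).erase sh) ((srcSet b).erase th)) := by

  classical
  have hlt : sh < th := hE.edge_lt _ hmem
  have hne : sh ≠ th := ne_of_lt hlt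
  have hbeg : ∀ r, beginsAt (E.erase (sh, th)) r = (beginsAt E r).erase (sh, th) := by
    intro r; simp [beginsAt, Finset.filter_erase]
  have hend : ∀ r, endsAt (E.erase (sh, th)) r = (endsAt E r).erase (sh, th) := by
    intro r; simp [endsAt, Finset.filter_erase]
  have hbeg' : ∀ r, r ≠ sh → beginsAt (E.erase (sh, th)) r = beginsAt E r := by
    intro r hr
    rw [hbeg]
    apply Finset.erase_eq_of_notMem
    simp [beginsAt, Finset.mem_filter]
    intro _; exact fun h => hr h.symm
  have hend' : ∀ r, r ≠ th → endsAt (E.erase (sh, th)) r = endsAt E r := by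
    intro r hr
    rw [hend]
    apply Finset.erase_eq_of_notMem
    simp [endsAt, Finset.mem_filter]
    intro _; exact fun h => hr h.symm
  have hsingle : ∀ (s : Finset (ℤ × ℤ)), s.card = 1 → (sh, th) ∈ s → s = {(sh, th)} := by
    intro s h1 h2
    obtain ⟨x, hx⟩ := Finset.card_eq_one.mp h1
    rw [hx] at h2 ⊢
    rw [Finset.mem_singleton] at h2
    rw [h2]
  have hmemE : (sh, th) ∈ endsAt E th := by simp [endsAt, Finset.mem_filter, hmem]
  have hmemB : (sh, th) ∈ beginsAt E sh := by simp [beginsAt, Finset.mem_filter, hmem]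
  -- th is a sink
  have hthB : th ∈ srcSet b := by
    by_contra hthB
    have hthA : th ∉ srcSet a := by
      intro h
      have h2 := hE.source_in th h
      rw [h2] at hmemE
      exact absurd hmemE (Finset.notMem_empty _)
    rcases hE.transit th hthA hthB with ⟨h1, h2⟩ | ⟨h1, h2⟩
    · rw [h2] at hmemE; exact absurd hmemE (Finset.notMem_empty _)
    · obtain ⟨e, he⟩ := Finset.card_eq_one.mp h1
      have heE : e ∈ E ∧ e.1 = th := by
        have : e ∈ beginsAt E th := by rw [he]; exact Finset.mem_singleton_self _
        simpa [beginsAt, Finset.mem_filter] using this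
      have hene : e ≠ (sh, th) := by
        intro h; rw [h] at heE; exact hne heE.2
      have h3 := hmax e heE.1 hene
      have h4 := hE.edge_lt e heE.1
      omega
  -- endsAt E th is exactly {(sh,th)}
  have hendTh : endsAt E th = {(sh, th)} := hsingle _ (hE.sink_in th hthB) hmemE
  have hendTh' : endsAt (E.erase (sh, th)) th = ∅ := by
    rw [hend, hendTh, Finset.erase_singleton]
  have hbegTh' : beginsAt (E.erase (sh, th)) th = ∅ := by
    rw [hbeg' th (Ne.symm hne)]
    exact hE.sink_out th hthB
  have hshB : sh ∉ srcSet b := by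
    intro h
    have := hE.sink_out sh h
    rw [this] at hmemB
    exact absurd hmemB (Finset.notMem_empty _)
  have hthE : ∃ j : Fin q, th = b j := by
    simp only [srcSet, Finset.mem_image, Finset.mem_univ, true_and] at hthB
    obtain ⟨j, hj⟩ := hthB
    exact ⟨j, hj.symm⟩
  refine ⟨hthE, ?_, ?_⟩
  · -- case (i): sh is not a source
    intro hsh
    have hshA : sh ∉ srcSet a := by
      simp only [srcSet, Finset.mem_image, Finset.mem_univ, true_and]
      rintro ⟨k, hk⟩
      exact hsh k hk.symm
    have htrans : (beginsAt E sh).card = 1 ∧ (endsAt E sh).card = 1 := by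
      rcases hE.transit sh hshA hshB with ⟨h1, h2⟩ | h
      · rw [h1] at hmemB; exact absurd hmemB (Finset.notMem_empty _)
      · exact h
    have hbegSh : beginsAt E sh = {(sh, th)} := hsingle _ htrans.1 hmemB
    have hbegSh' : beginsAt (E.erase (sh, th)) sh = ∅ := by
      rw [hbeg, hbegSh, Finset.erase_singleton]
    have hendSh' : endsAt (E.erase (sh, th)) sh = endsAt E sh := hend' sh hne
    constructor
    · intro e he; exact hE.edge_lt e (Finset.mem_of_mem_erase he)
    · rw [Finset.disjoint_insert_right]
      exact ⟨hshA, Finset.disjoint_of_subset_right (Finset.erase_subset _ _) hE.disjAB⟩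
    · intro x hx
      rw [hbeg' x (fun h => hshA (h ▸ hx))]
      exact hE.source_out x hx
    · intro x hx
      have hxth : x ≠ th := by
        intro h; rw [h] at hx
        exact Finset.disjoint_left.mp hE.disjAB hx hthB
      rw [hend' x hxth]
      exact hE.source_in x hx
    · intro y hy
      rcases Finset.mem_insert.mp hy with h | h
      · rw [h, hendSh']; exact htrans.2
      · obtain ⟨hyth, hyB⟩ := Finset.mem_erase.mp h
        rw [hend' y hyth]
        exact hE.sink_in y hyB
    · intro y hy
      rcases Finset.mem_insert.mp hy with h | h
      · rw [h]; exact hbegSh'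
      · obtain ⟨hyth, hyB⟩ := Finset.mem_erase.mp h
        have hysh : y ≠ sh := fun hh => hshB (hh ▸ hyB)
        rw [hbeg' y hysh]
        exact hE.sink_out y hyB
    · intro r hrA hrB
      have hrsh : r ≠ sh := fun h => hrB (h ▸ Finset.mem_insert_self _ _)
      by_cases hrth : r = th
      · left
        rw [hrth]
        exact ⟨hbegTh', hendTh'⟩
      · have hrB' : r ∉ srcSet b := fun h =>
          hrB (Finset.mem_insert_of_mem (Finset.mem_erase.mpr ⟨hrth, h⟩))
        rw [hbeg' r hrsh, hend' r hrth]
        exact hE.transit r hrA hrB'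
  · -- case (ii): sh is a source
    rintro ⟨k, hk⟩
    have hshA : sh ∈ srcSet a := by
      simp only [srcSet, Finset.mem_image, Finset.mem_univ, true_and]
      exact ⟨k, hk.symm⟩
    have hbegSh : beginsAt E sh = {(sh, th)} := hsingle _ (hE.source_out sh hshA) hmemB
    have hbegSh' : beginsAt (E.erase (sh, th)) sh = ∅ := by
      rw [hbeg, hbegSh, Finset.erase_singleton]
    have hendSh' : endsAt (E.erase (sh, th)) sh = ∅ := by
      rw [hend' sh hne]
      exact hE.source_in sh hshA
    constructor
    · intro e he; exact hE.edge_lt e (Finset.mem_of_mem_erase he)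
    · exact Finset.disjoint_of_subset_left (Finset.erase_subset _ _)
        (Finset.disjoint_of_subset_right (Finset.erase_subset _ _) hE.disjAB)
    · intro x hx
      obtain ⟨hxsh, hxA⟩ := Finset.mem_erase.mp hx
      rw [hbeg' x hxsh]
      exact hE.source_out x hxA
    · intro x hx
      obtain ⟨hxsh, hxA⟩ := Finset.mem_erase.mp hx
      have hxth : x ≠ th := by
        intro h; rw [h] at hxA
        exact Finset.disjoint_left.mp hE.disjAB hxA hthB
      rw [hend' x hxth]
      exact hE.source_in x hxA
    · intro y hy
      obtain ⟨hyth, hyB⟩ := Finset.mem_erase.mp hy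
      rw [hend' y hyth]
      exact hE.sink_in y hyB
    · intro y hy
      obtain ⟨hyth, hyB⟩ := Finset.mem_erase.mp hy
      have hysh : y ≠ sh := fun hh => hshB (hh ▸ hyB)
      rw [hbeg' y hysh]
      exact hE.sink_out y hyB
    · intro r hrA hrB
      by_cases hrsh : r = sh
      · left; rw [hrsh]; exact ⟨hbegSh', hendSh'⟩
      by_cases hrth : r = th
      · left; rw [hrth]; exact ⟨hbegTh', hendTh'⟩
      have hrA' : r ∉ srcSet a := fun h => hrA (Finset.mem_erase.mpr ⟨hrsh, h⟩)
      have hrB' : r ∉ srcSet b := fun h => hrB (Finset.mem_erase.mpr ⟨hrth, h⟩)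
      rw [hbeg' r hrsh, hend' r hrth]
      exact hE.transit r hrA' hrB'
end

section
/- Let Γ and Γ' be flows of 𝓕_i(a_1,…,a_q; b_1,…,b_q) with 1 ≤ a_1 < … < a_q ≤ i < b_q < … < b_1 ≤ n and Γ < Γ'. Then the sequence (ν_1(Γ),…,ν_n(Γ)) is smaller than (ν_1(Γ'),…,ν_n(Γ')) in the antilexicographic order whose components are compared by the dominance order on ℤⁿ. -/
open Finset

/-- A list of edges ordered so that the ends are strictly decreasing. -/
def DescList (l : List (ℤ × ℤ)) : Prop := l.Pairwise (fun e f => f.2 < e.2)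

/-- The order on flows: `Γ < Γ'` iff, enumerating the edges of `Γ` and `Γ'` with
strictly decreasing ends, at the first index where the enumerations differ the
edge of `Γ` has a strictly larger beginning than the edge of `Γ'`. -/
def FlowLt (E E' : FlowGraph) : Prop :=
  ∃ (u v v' : List (ℤ × ℤ)) (e e' : ℤ × ℤ),
    DescList (u ++ e :: v) ∧ DescList (u ++ e' :: v') ∧
    (u ++ e :: v).toFinset = E ∧ (u ++ e' :: v').toFinset = E' ∧
    e'.1 < e.1

/-- The `s`-th component of the vector `ν_m(Γ) = Σ { ε_s | (s,t) edge of Γ, s ≤ m < t }`. -/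
def nuC (E : FlowGraph) (m s : ℤ) : ℤ :=
  ((E.filter (fun e => e.1 = s ∧ s ≤ m ∧ m < e.2)).card : ℤ)

/-- Dominance order: `x ≤ y` iff all initial partial sums (over `1,…,k`) of `x`
are at most those of `y`. -/
def DomLE (x y : ℤ → ℤ) : Prop :=
  ∀ k : ℤ, ∑ j ∈ Finset.Icc 1 k, x j ≤ ∑ j ∈ Finset.Icc 1 k, y j


section AuxLemmas

lemma flow_start_ge {E : FlowGraph} {A B : Finset ℤ} (hF : IsFlow E A B)
    (hA : ∀ x ∈ A, 1 ≤ x) : ∀ f ∈ E, 1 ≤ f.1 := by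
  intro f hf
  have hS : (E.image Prod.fst).Nonempty := ⟨f.1, Finset.mem_image_of_mem _ hf⟩
  set m := (E.image Prod.fst).min' hS with hm
  obtain ⟨g, hg, hgm⟩ := Finset.mem_image.mp ((E.image Prod.fst).min'_mem hS)
  have hend : endsAt E m = ∅ := by
    rw [Finset.eq_empty_iff_forall_notMem]
    intro p hp
    rw [endsAt, Finset.mem_filter] at hp
    have h1 : p.1 < m := hp.2 ▸ hF.edge_lt p hp.1
    have h2 : m ≤ p.1 := Finset.min'_le _ _ (Finset.mem_image_of_mem _ hp.1)
    omega
  have hbeg : g ∈ beginsAt E m := Finset.mem_filter.mpr ⟨hg, hgm⟩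
  have hmA : m ∈ A := by
    by_contra hmA
    have hmB : m ∉ B := by
      intro hmB
      have := hF.sink_out m hmB
      simp [this] at hbeg
    rcases hF.transit m hmA hmB with ⟨h1, _⟩ | ⟨_, h2⟩
    · simp [h1] at hbeg
    · rw [hend] at h2; simp at h2
  have : m ≤ f.1 := Finset.min'_le _ _ (Finset.mem_image_of_mem _ hf)
  have := hA m hmA
  omega

lemma flow_end_le {E : FlowGraph} {A B : Finset ℤ} {n : ℤ} (hF : IsFlow E A B)
    (hB : ∀ x ∈ B, x ≤ n) : ∀ f ∈ E, f.2 ≤ n := by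
  intro f hf
  have hS : (E.image Prod.snd).Nonempty := ⟨f.2, Finset.mem_image_of_mem _ hf⟩
  set m := (E.image Prod.snd).max' hS with hm
  obtain ⟨g, hg, hgm⟩ := Finset.mem_image.mp ((E.image Prod.snd).max'_mem hS)
  have hbeg : beginsAt E m = ∅ := by
    rw [Finset.eq_empty_iff_forall_notMem]
    intro p hp
    rw [beginsAt, Finset.mem_filter] at hp
    have h1 : m < p.2 := hp.2 ▸ hF.edge_lt p hp.1
    have h2 : p.2 ≤ m := Finset.le_max' _ _ (Finset.mem_image_of_mem _ hp.1)
    omega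
  have hend : g ∈ endsAt E m := Finset.mem_filter.mpr ⟨hg, hgm⟩
  have hmB : m ∈ B := by
    by_contra hmB
    have hmA : m ∉ A := by
      intro hmA
      have := hF.source_in m hmA
      simp [this] at hend
    rcases hF.transit m hmA hmB with ⟨_, h1⟩ | ⟨h2, _⟩
    · simp [h1] at hend
    · rw [hbeg] at h2; simp at h2
  have : f.2 ≤ m := Finset.le_max' _ _ (Finset.mem_image_of_mem _ hf)
  have := hB m hmB
  omega

lemma descList_nodup {l : List (ℤ×ℤ)} (h : DescList l) : l.Nodup :=
  h.imp (fun hab h' => by simp [h'] at hab)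

lemma descList_prefix {u : List (ℤ×ℤ)} {c : ℤ×ℤ} {w : List (ℤ×ℤ)}
    (h : DescList (u ++ c :: w)) :
    (∀ f ∈ u, c.2 < f.2) ∧ (∀ f ∈ w, f.2 < c.2) := by
  rw [DescList, List.pairwise_append] at h
  obtain ⟨_, h2, h3⟩ := h
  rw [List.pairwise_cons] at h2
  exact ⟨fun f hf => h3 f hf c (by simp), h2.1⟩

lemma ends_ne {A B : Finset ℤ} {E E' : FlowGraph}
    (hF : IsFlow E A B) (hF' : IsFlow E' A B)
    {u v v' : List (ℤ×ℤ)} {e e' : ℤ×ℤ}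
    (hd : DescList (u ++ e :: v)) (hd' : DescList (u ++ e' :: v'))
    (hL : (u ++ e :: v).toFinset = E) (hL' : (u ++ e' :: v').toFinset = E')
    (hlt : e.2 < e'.2) : False := by
  set t' := e'.2 with ht'
  have hEend : endsAt E t' = ∅ := by
    rw [Finset.eq_empty_iff_forall_notMem]
    intro p hp
    rw [endsAt, Finset.mem_filter] at hp
    have hpE : p ∈ (u ++ e :: v).toFinset := hL ▸ hp.1
    rw [List.mem_toFinset, List.mem_append] at hpE
    rcases hpE with hpu | hpc
    · have := (descList_prefix hd').1 p hpu
      omega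
    · rcases List.mem_cons.mp hpc with rfl | hpv
      · omega
      · have := (descList_prefix hd).2 p hpv
        omega
  have he'E' : e' ∈ E' := by
    rw [← hL', List.mem_toFinset]; simp
  have hE'end : e' ∈ endsAt E' t' := Finset.mem_filter.mpr ⟨he'E', rfl⟩
  have ht'A : t' ∉ A := by
    intro hA
    have := hF'.source_in t' hA
    simp [this] at hE'end
  have ht'B : t' ∉ B := by
    intro hB
    have := hF.sink_in t' hB
    rw [hEend] at this; simp at this
  obtain ⟨g, hgE', hg1⟩ : ∃ g ∈ E', g.1 = t' := by
    rcases hF'.transit t' ht'A ht'B with ⟨_, h2⟩ | ⟨h1, _⟩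
    · rw [h2] at hE'end; simp at hE'end
    · have : (beginsAt E' t').Nonempty := Finset.card_pos.mp (by omega)
      obtain ⟨g, hg⟩ := this
      rw [beginsAt, Finset.mem_filter] at hg
      exact ⟨g, hg.1, hg.2⟩
  have hgu : g ∈ u := by
    have : g ∈ (u ++ e' :: v').toFinset := hL' ▸ hgE'
    rw [List.mem_toFinset, List.mem_append] at this
    rcases this with h | h
    · exact h
    · exfalso
      have hg2 : t' < g.2 := hg1 ▸ hF'.edge_lt g hgE'
      rcases List.mem_cons.mp h with rfl | hgv'
      · omega
      · have := (descList_prefix hd').2 g hgv'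
        omega
  have hgE : g ∈ E := by
    rw [← hL, List.mem_toFinset, List.mem_append]; exact Or.inl hgu
  have hbeg : g ∈ beginsAt E t' := Finset.mem_filter.mpr ⟨hgE, hg1⟩
  rcases hF.transit t' ht'A ht'B with ⟨h1, _⟩ | ⟨_, h2⟩
  · simp [h1] at hbeg
  · rw [hEend] at h2; simp at h2

lemma nuC_decomp {u : List (ℤ×ℤ)} {e0 : ℤ×ℤ} {v0 : List (ℤ×ℤ)} {E0 : FlowGraph} {t : ℤ}
    (hd : DescList (u ++ e0 :: v0)) (hL : (u ++ e0 :: v0).toFinset = E0)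
    (he2 : e0.2 = t) (he1 : e0.1 < t) :
    (∀ m s, t ≤ m →
      nuC E0 m s = ((u.toFinset.filter (fun f => f.1 = s ∧ s ≤ m ∧ m < f.2)).card : ℤ)) ∧
    (∀ s, nuC E0 (t-1) s =
      ((u.toFinset.filter (fun f => f.1 = s ∧ s ≤ t-1 ∧ t-1 < f.2)).card : ℤ)
        + (if e0.1 = s then 1 else 0)) := by
  have hnd : (u ++ e0 :: v0).Nodup := descList_nodup hd
  have hdisj : Disjoint u.toFinset (e0 :: v0).toFinset := by
    rw [List.disjoint_toFinset_iff_disjoint]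
    exact List.disjoint_of_nodup_append hnd
  have hv0 : ∀ f ∈ v0, f.2 < t := fun f hf => he2 ▸ (descList_prefix hd).2 f hf
  have hsplit : ∀ m s, nuC E0 m s =
      ((u.toFinset.filter (fun f => f.1 = s ∧ s ≤ m ∧ m < f.2)).card : ℤ)
      + (((e0 :: v0).toFinset.filter (fun f => f.1 = s ∧ s ≤ m ∧ m < f.2)).card : ℤ) := by
    intro m s
    rw [nuC, ← hL, List.toFinset_append, Finset.filter_union,
      Finset.card_union_of_disjoint (Finset.disjoint_filter_filter hdisj)]
    push_cast
    ring
  constructor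
  · intro m s hm
    rw [hsplit]
    have : ((e0 :: v0).toFinset.filter (fun f => f.1 = s ∧ s ≤ m ∧ m < f.2)) = ∅ := by
      rw [Finset.filter_eq_empty_iff]
      intro f hf
      rw [List.mem_toFinset, List.mem_cons] at hf
      rcases hf with rfl | hf
      · intro h; omega
      · have := hv0 f hf; intro h; omega
    rw [this]
    simp
  · intro s
    rw [hsplit]
    congr 1
    by_cases hes : e0.1 = s
    · have : ((e0 :: v0).toFinset.filter (fun f => f.1 = s ∧ s ≤ t-1 ∧ t-1 < f.2)) = {e0} := by
        ext f
        rw [Finset.mem_filter, List.mem_toFinset, List.mem_cons, Finset.mem_singleton]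
        constructor
        · rintro ⟨rfl | hf, hp⟩
          · rfl
          · have := hv0 f hf; omega
        · rintro rfl
          exact ⟨Or.inl rfl, hes, by omega, by omega⟩
      rw [this]
      simp [hes]
    · have : ((e0 :: v0).toFinset.filter (fun f => f.1 = s ∧ s ≤ t-1 ∧ t-1 < f.2)) = ∅ := by
        rw [Finset.filter_eq_empty_iff]
        intro f hf
        rw [List.mem_toFinset, List.mem_cons] at hf
        rcases hf with rfl | hf
        · intro h; exact hes h.1
        · have := hv0 f hf; intro h; omega
      rw [this]
      simp [hes]

end AuxLemmas

/-- Lemma 34: if `Γ < Γ'` in `𝓕_i(a_1,…,a_q; b_1,…,b_q)` (all data lying in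
`[1, n]`), then `(ν_1(Γ),…,ν_n(Γ))` is smaller than `(ν_1(Γ'),…,ν_n(Γ'))` in
the antilexicographic order whose components are compared by the dominance
order. -/
theorem statement13 {q : ℕ} (n i : ℤ) (a b : Fin q → ℤ)
    (ha : StrictMono a) (hb : StrictAnti b)
    (hai : ∀ j, a j ≤ i) (hbi : ∀ j, i < b j)
    (h1 : ∀ j, 1 ≤ a j) (h2 : ∀ j, b j ≤ n)
    (E E' : FlowGraph) (hE : InF i a b E) (hE' : InF i a b E')
    (hlt : FlowLt E E') :
    ∃ x : ℤ, 1 ≤ x ∧ x ≤ n ∧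
      DomLE (nuC E x) (nuC E' x) ∧ nuC E x ≠ nuC E' x ∧
      ∀ m : ℤ, x < m → m ≤ n → nuC E m = nuC E' m := by
  obtain ⟨u, v, v', e, e', hd, hd', hL, hL', hee'⟩ := hlt
  obtain ⟨hF, _⟩ := hE
  obtain ⟨hF', _⟩ := hE'
  have hA1 : ∀ x ∈ srcSet a, 1 ≤ x := by
    intro x hx
    obtain ⟨j, _, rfl⟩ := Finset.mem_image.mp hx
    exact h1 j
  have hBn : ∀ x ∈ srcSet b, x ≤ n := by
    intro x hx
    obtain ⟨j, _, rfl⟩ := Finset.mem_image.mp hx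
    exact h2 j
  have heE : e ∈ E := by rw [← hL, List.mem_toFinset]; simp
  have he'E' : e' ∈ E' := by rw [← hL', List.mem_toFinset]; simp
  -- the two distinguished edges have the same end
  have ht : e.2 = e'.2 := by
    rcases lt_trichotomy e.2 e'.2 with h | h | h
    · exact absurd (ends_ne hF hF' hd hd' hL hL' h) id
    · exact h
    · exact absurd (ends_ne hF' hF hd' hd hL' hL h) id
  set t := e.2 with htdef
  have hs : e.1 < t := hF.edge_lt e heE
  have hs' : e'.1 < t := by have := hF'.edge_lt e' he'E'; omega
  have hs1 : 1 ≤ e.1 := flow_start_ge hF hA1 e heE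
  have hs'1 : 1 ≤ e'.1 := flow_start_ge hF' hA1 e' he'E'
  have htn : t ≤ n := flow_end_le hF hBn e heE
  obtain ⟨hE1, hE2⟩ := nuC_decomp hd hL htdef.symm hs
  obtain ⟨hE'1, hE'2⟩ := nuC_decomp hd' hL' (htdef ▸ ht.symm) hs'
  refine ⟨t - 1, by omega, by omega, ?_, ?_, ?_⟩
  · -- dominance
    intro k
    rw [Finset.sum_congr rfl (fun j _ => hE2 j), Finset.sum_congr rfl (fun j _ => hE'2 j),
      Finset.sum_add_distrib, Finset.sum_add_distrib]
    have h1' : ∑ j ∈ Finset.Icc 1 k, (if e.1 = j then (1:ℤ) else 0)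
        = if e.1 ∈ Finset.Icc 1 k then 1 else 0 := Finset.sum_ite_eq _ _ _
    have h2' : ∑ j ∈ Finset.Icc 1 k, (if e'.1 = j then (1:ℤ) else 0)
        = if e'.1 ∈ Finset.Icc 1 k then 1 else 0 := Finset.sum_ite_eq _ _ _
    rw [h1', h2']
    have : (if e.1 ∈ Finset.Icc 1 k then (1:ℤ) else 0)
        ≤ (if e'.1 ∈ Finset.Icc 1 k then 1 else 0) := by
      simp only [Finset.mem_Icc]
      split_ifs with hc1 hc2 <;> omega
    omega
  · -- the vectors differ at e'.1
    intro hcon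
    have := congrFun hcon e'.1
    rw [hE2 e'.1, hE'2 e'.1] at this
    have hne : e.1 ≠ e'.1 := by omega
    simp [hne] at this
  · -- agreement above t-1
    intro m hm1 hm2
    funext s
    rw [hE1 m s (by omega), hE'1 m s (by omega)]
end

section
/- Let λ be a composition of length n, T a regular row standard λ-tableau, 1 ≤ a_1 < … < a_q ≤ i < b_q < … < b_1 ≤ n, and Γ ∈ 𝓕_i(a_1,…,a_q; b_1,…,b_q) such that σ_{Γ,i}(T) is well-defined. Then for every m = 1,…,n, shape(σ_{Γ,i}(T)[m]) = shape(T[m]) + ν_m(Γ) + Σ_{k=i+1}^m ε_k. -/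
open Finset

/-- `lam` is a composition of length `n`: it vanishes outside `{1,…,n}`.
(Rows are indexed by the integers `1,…,n`.) -/
def IsComposition (n : ℤ) (lam : ℤ → ℕ) : Prop :=
  ∀ r : ℤ, r < 1 ∨ n < r → lam r = 0

/-- A (regular row standard) `lam`-tableau with entries in `{1,…,n}` is modelled
by its rows, each row being the multiset of its entries (which determines the
row standard tableau uniquely): row `r` has `lam r` entries, and every entry of
row `r` lies in `{1,…,n}` and is at least `r`. -/
def IsRegularTab (n : ℤ) (lam : ℤ → ℕ) (T : ℤ → Multiset ℤ) : Prop :=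
  (∀ r : ℤ, (T r).card = lam r) ∧
  (∀ r : ℤ, ∀ x ∈ T r, r ≤ x ∧ 1 ≤ x ∧ x ≤ n)

/-- The edges of `E` beginning at `r`. -/
def outEdges (E : FlowGraph) (r : ℤ) : Finset (ℤ × ℤ) := E.filter (fun e => e.1 = r)

/-- `σ_{Γ,i}(T)`: for every edge `(s,t)` of `Γ`, one entry `t` of row `s` is
replaced by `s`; moreover one entry `k` is added to each row `k = i+1,…,n`. -/
def sigmaTab (E : FlowGraph) (i n : ℤ) (T : ℤ → Multiset ℤ) : ℤ → Multiset ℤ :=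
  fun r =>
    (T r - (outEdges E r).val.map Prod.snd)
      + Multiset.replicate (outEdges E r).card r
      + (if i < r ∧ r ≤ n then {r} else 0)

/-- `σ_{Γ,i}(T)` is well-defined: for every edge `(s,t)` of `Γ`, row `s` of `T`
contains an entry `t`. -/
def SigmaDefined (E : FlowGraph) (T : ℤ → Multiset ℤ) : Prop :=
  ∀ e ∈ E, e.2 ∈ T e.1

/-- The length of row `r` of the truncated tableau `T[m]` (all entries `> m`
removed), i.e. the `r`-th component of `shape (T[m])`. -/
def shapeR (T : ℤ → Multiset ℤ) (m r : ℤ) : ℕ :=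
  ((T r).filter (fun x => x ≤ m)).card

/-- Lemma 31: if `σ_{Γ,i}(T)` is well-defined, then for every `m = 1,…,n`,
`shape(σ_{Γ,i}(T)[m]) = shape(T[m]) + ν_m(Γ) + Σ_{k=i+1}^m ε_k`
(stated componentwise, at each row index `r`). -/
theorem statement14 {q : ℕ} (n i : ℤ) (a b : Fin q → ℤ)
    (ha : StrictMono a) (hb : StrictAnti b)
    (hai : ∀ j, a j ≤ i) (hbi : ∀ j, i < b j)
    (h1 : ∀ j, 1 ≤ a j) (h2 : ∀ j, b j ≤ n)
    (lam : ℤ → ℕ) (hlam : IsComposition n lam)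
    (T : ℤ → Multiset ℤ) (hT : IsRegularTab n lam T)
    (E : FlowGraph) (hE : InF i a b E)
    (hdef : SigmaDefined E T) :
    ∀ m : ℤ, 1 ≤ m → m ≤ n → ∀ r : ℤ,
      (shapeR (sigmaTab E i n T) m r : ℤ)
        = (shapeR T m r : ℤ) + nuC E m r + (if i < r ∧ r ≤ m then 1 else 0) := by
  intro m hm1 hmn r
  obtain ⟨hflow, htrans⟩ := hE
  have hnu : nuC E m r = (((outEdges E r).filter (fun e => r ≤ m ∧ m < e.2)).card : ℤ) := by
    unfold nuC outEdges
    rw [Finset.filter_filter]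
  rcases Finset.eq_empty_or_nonempty (outEdges E r) with hout | ⟨e, he⟩
  · have hn0 : nuC E m r = 0 := by rw [hnu, hout]; simp
    unfold shapeR sigmaTab
    rw [hout, hn0]
    simp only [Finset.card_empty, Multiset.replicate_zero, Finset.empty_val,
      Multiset.map_zero, Multiset.sub_zero, add_zero]
    rw [Multiset.filter_add, Multiset.card_add]
    have c3 : (Multiset.filter (fun x => x ≤ m)
        (if i < r ∧ r ≤ n then ({r} : Multiset ℤ) else 0)).card
        = if i < r ∧ r ≤ m then 1 else 0 := by
      by_cases h1' : i < r ∧ r ≤ n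
      · rw [if_pos h1', Multiset.filter_singleton]
        split_ifs <;> simp_all
      · rw [if_neg h1']
        simp only [Multiset.filter_zero, Multiset.card_zero]
        rw [if_neg (fun hx => h1' ⟨hx.1, le_trans hx.2 hmn⟩)]
    rw [c3]
    split_ifs <;> push_cast <;> ring
  · have hE1 : e ∈ E ∧ e.1 = r := by simpa [outEdges] using he
    have hrt : r < e.2 := hE1.2 ▸ hflow.edge_lt e hE1.1
    have hmem : e.2 ∈ T r := hE1.2 ▸ hdef e hE1.1
    have hri : r ≤ i := by
      by_cases hA : r ∈ srcSet a
      · obtain ⟨j, _, hj⟩ := Finset.mem_image.mp hA; exact hj ▸ hai j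
      by_cases hB : r ∈ srcSet b
      · exfalso
        have h0 : beginsAt E r = ∅ := hflow.sink_out r hB
        rw [show beginsAt E r = outEdges E r from rfl] at h0
        rw [h0] at he
        exact absurd he (Finset.notMem_empty e)
      · apply htrans
        unfold IsTransitPoint transitSet
        simp only [Finset.mem_sdiff, Finset.mem_union, Finset.mem_image]
        exact ⟨Or.inl ⟨e, hE1.1, hE1.2⟩, by simp [hA, hB]⟩
    have hcard : (outEdges E r).card ≤ 1 := by
      by_cases hA : r ∈ srcSet a
      · exact le_of_eq (hflow.source_out r hA)
      by_cases hB : r ∈ srcSet b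
      · rw [show outEdges E r = beginsAt E r from rfl, hflow.sink_out r hB]; simp
      rcases hflow.transit r hA hB with ⟨h1', _⟩ | ⟨h1', _⟩
      · rw [show outEdges E r = beginsAt E r from rfl, h1']; simp
      · exact le_of_eq h1'
    have hsing : outEdges E r = {e} :=
      Finset.eq_singleton_iff_unique_mem.mpr
        ⟨he, fun x hx => Finset.card_le_one.mp hcard x hx e he⟩
    have key : sigmaTab E i n T r = (T r - {e.2}) + {r} := by
      unfold sigmaTab
      rw [hsing, if_neg (show ¬(i < r ∧ r ≤ n) by rintro ⟨hx, _⟩; omega)]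
      simp
    have hsle : ({e.2} : Multiset ℤ) ≤ T r := by simpa using hmem
    have hle : Multiset.filter (fun x => x ≤ m) {e.2}
        ≤ Multiset.filter (fun x => x ≤ m) (T r) :=
      Multiset.filter_le_filter _ hsle
    have hclee : (Multiset.filter (fun x => x ≤ m) ({e.2} : Multiset ℤ)).card
        ≤ (Multiset.filter (fun x => x ≤ m) (T r)).card :=
      Multiset.card_le_card hle
    have hnuv : nuC E m r = (if r ≤ m ∧ m < e.2 then 1 else 0 : ℤ) := by
      rw [hnu, hsing, Finset.filter_singleton]
      split_ifs <;> simp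
    have c1 : (Multiset.filter (fun x => x ≤ m) ({e.2} : Multiset ℤ)).card
        = if e.2 ≤ m then 1 else 0 := by
      rw [Multiset.filter_singleton]; split_ifs <;> simp
    have c2 : (Multiset.filter (fun x => x ≤ m) ({r} : Multiset ℤ)).card
        = if r ≤ m then 1 else 0 := by
      rw [Multiset.filter_singleton]; split_ifs <;> simp
    unfold shapeR
    rw [key, hnuv, Multiset.filter_add, Multiset.card_add, Multiset.filter_sub,
      Multiset.card_sub hle, c1, c2]
    rw [c1] at hclee
    split_ifs at hclee ⊢ <;> omega
end

section
/- Let λ be a composition of length n, let T and S be regular row standard λ-tableaux, let 1 ≤ a_1 < … < a_q ≤ i < b_q < … < b_1 ≤ n, and let Γ, Γ' ∈ 𝓕_i(a_1,…,a_q; b_1,…,b_q) with Γ ≤ Γ' be such that σ_{Γ,i}(T) and σ_{Γ',i}(S) are well-defined and σ_{Γ',i}(S) ≤ σ_{Γ,i}(T) in the tableau order. Then S ≤ T, and moreover S < T if Γ < Γ'. -/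
open Finset

/-- The `m`-th component of `chain(T)`, i.e. `shape (T[m])`, as a vector of
integers. -/
def shapeVec (T : ℤ → Multiset ℤ) (m : ℤ) : ℤ → ℤ := fun r => (shapeR T m r : ℤ)

/-- The tableau order: `T < S` iff `chain(T) = (shape T[1],…,shape T[n])` is
smaller than `chain(S)` in the antilexicographic order with the dominance order
on components. -/
def TabLT (n : ℤ) (T S : ℤ → Multiset ℤ) : Prop :=
  ∃ m : ℤ, 1 ≤ m ∧ m ≤ n ∧
    DomLE (shapeVec T m) (shapeVec S m) ∧ shapeVec T m ≠ shapeVec S m ∧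
    ∀ m' : ℤ, m < m' → m' ≤ n → shapeVec T m' = shapeVec S m'

/-- `T ≤ S` in the tableau order: `T < S` or `chain(T) = chain(S)`. -/
def TabLE (n : ℤ) (T S : ℤ → Multiset ℤ) : Prop :=
  TabLT n T S ∨ ∀ m : ℤ, 1 ≤ m → m ≤ n → shapeVec T m = shapeVec S m

/-!
Truncation interacts additively with `σ_{Γ,i}`: row `r` of `σ_{Γ,i}(T)[m]` has
`shape(T[m])_r + ν_m(Γ)_r` boxes plus a number depending only on `i, n, m, r`. Hence the
hypothesis compares `chain(S) + ν(Γ')` with `chain(T) + ν(Γ)`, and it suffices to compare `ν(Γ)`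
with `ν(Γ')`. If `Γ < Γ'` and the first differing edges are `(s,t)` and `(s',t)`, then
`ν_m(Γ) = ν_m(Γ')` for `m ≥ t`, while `ν_{t-1}(Γ')` arises from `ν_{t-1}(Γ)` by moving a unit
from `s` to `s' < s`, a strict increase in dominance.
-/

section Dominance

/-- `DomLE` ignores the entries at indices `< 1`, so this is stronger than `DomLE x y ∧ x ≠ y`. -/
def DomLT (x y : ℤ → ℤ) : Prop := DomLE x y ∧ ¬ DomLE y x

lemma DomLE.refl (x : ℤ → ℤ) : DomLE x x := fun _ => le_rfl

lemma DomLE.add {a b c d : ℤ → ℤ} (hab : DomLE a b) (hcd : DomLE c d) :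
    DomLE (a + c) (b + d) := fun k => by
  simpa only [Pi.add_apply, sum_add_distrib] using add_le_add (hab k) (hcd k)

lemma domLE_add_right_iff {x y z : ℤ → ℤ} : DomLE (x + z) (y + z) ↔ DomLE x y := by
  simp only [DomLE, Pi.add_apply, sum_add_distrib, add_le_add_iff_right]

lemma domLT_add_single (f : ℤ → ℤ) {s s' : ℤ} (hs' : 1 ≤ s') (hlt : s' < s) :
    DomLT (f + Pi.single s 1) (f + Pi.single s' 1) := by
  simp only [DomLT, DomLE, Pi.add_apply, sum_add_distrib, sum_pi_single', mem_Icc]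
  refine ⟨fun k => ?_, fun h => ?_⟩
  · split_ifs <;> omega
  · have := h s'
    split_ifs at this <;> omega

/-- The antilexicographic dominance order on chains `m ↦ x m`;
`TabLT n T S` is `ChainLT n (shapeVec T) (shapeVec S)` by definition. -/
def ChainLT (n : ℤ) (x y : ℤ → ℤ → ℤ) : Prop :=
  ∃ m : ℤ, 1 ≤ m ∧ m ≤ n ∧ DomLE (x m) (y m) ∧ x m ≠ y m ∧
    ∀ m' : ℤ, m < m' → m' ≤ n → x m' = y m'

def ChainLE (n : ℤ) (x y : ℤ → ℤ → ℤ) : Prop :=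
  ChainLT n x y ∨ ∀ m : ℤ, 1 ≤ m → m ≤ n → x m = y m

variable {n : ℤ} {x y z : ℤ → ℤ → ℤ}

lemma chainLT_add_right_iff : ChainLT n (x + z) (y + z) ↔ ChainLT n x y := by
  simp only [ChainLT, Pi.add_apply, domLE_add_right_iff, ne_eq, add_left_inj]

lemma chainLE_add_right_iff : ChainLE n (x + z) (y + z) ↔ ChainLE n x y := by
  simp only [ChainLE, chainLT_add_right_iff, Pi.add_apply, add_left_inj]

lemma chainLT_of_chainLE_add {M : ℤ} {p q : ℤ → ℤ → ℤ} (h : ChainLE n (x + p) (y + q))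
    (hM : 1 ≤ M) (hMn : M ≤ n) (hqp : DomLT (q M) (p M)) (hpq : ∀ m, M < m → p m = q m) :
    ChainLT n x y := by
  have cancel : ∀ m, M < m → (x + p) m = (y + q) m → x m = y m := fun m hm h => by
    rw [Pi.add_apply, Pi.add_apply, hpq m hm] at h
    exact add_right_cancel h
  suffices atM : DomLE ((x + p) M) ((y + q) M) →
      (∀ m, M < m → m ≤ n → (x + p) m = (y + q) m) → ChainLT n x y by
    rcases h with ⟨m₀, hm₀, hm₀n, hdom, hne, habove⟩ | heq
    · rcases lt_or_ge M m₀ with hlt | hle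
      · simp only [Pi.add_apply, hpq m₀ hlt, domLE_add_right_iff, ne_eq, add_left_inj] at hdom hne
        exact ⟨m₀, hm₀, hm₀n, hdom, hne, fun m hm hmn => cancel m (hlt.trans hm) (habove m hm hmn)⟩
      · refine atM ?_ fun m hm hmn => habove m (hle.trans_lt hm) hmn
        rcases hle.eq_or_lt with rfl | hlt
        · exact hdom
        · rw [habove M hlt hMn]
          exact DomLE.refl _
    · exact atM (heq M hM hMn ▸ DomLE.refl _) fun m hm hmn => heq m (by omega) hmn
  intro hdom habove
  refine ⟨M, hM, hMn, ?_, fun hxy => hqp.2 ?_, fun m hm hmn => cancel m hm (habove m hm hmn)⟩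
  · have := hdom.add hqp.1
    rwa [Pi.add_apply, Pi.add_apply, add_right_comm (y M), domLE_add_right_iff,
      domLE_add_right_iff] at this
  · rwa [Pi.add_apply, Pi.add_apply, hxy, add_comm, add_comm (y M), domLE_add_right_iff] at hdom

end Dominance

section Shape

/-- The entries `k = i+1,…,n` that `σ_{Γ,i}` adds, counted in `shape (σ_{Γ,i}(T)[m])`. -/
def addedShape (i n : ℤ) : ℤ → ℤ → ℤ := fun m r => if i < r ∧ r ≤ m ∧ r ≤ n then 1 else 0

variable {E : FlowGraph} {T : ℤ → Multiset ℤ}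

lemma snd_map_outEdges_le (hdef : SigmaDefined E T) (r : ℤ) :
    (outEdges E r).val.map Prod.snd ≤ T r := by
  rw [Multiset.le_iff_subset]
  · intro t ht
    obtain ⟨x, hx, rfl⟩ := Multiset.mem_map.mp ht
    obtain ⟨hxE, rfl⟩ := mem_filter.mp hx
    exact hdef x hxE
  · refine (outEdges E r).nodup.map_on fun x hx y hy hxy => Prod.ext ?_ hxy
    exact (mem_filter.mp hx).2.trans (mem_filter.mp hy).2.symm

lemma shapeVec_sigmaTab (hdef : SigmaDefined E T) (hlt : ∀ x ∈ E, x.1 < x.2) (i n : ℤ) :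
    shapeVec (sigmaTab E i n T) = shapeVec T + nuC E + addedShape i n := by
  classical
  funext m r
  -- an edge `(r,t)` contributes `[r ≤ m] - [t ≤ m] = [r ≤ m < t]` boxes
  have hcross : (((outEdges E r).filter fun _ => r ≤ m).card : ℤ)
      - ((outEdges E r).filter fun x => x.2 ≤ m).card = nuC E m r := by
    simp only [nuC, outEdges, filter_filter, card_filter, Nat.cast_sum, ← sum_sub_distrib]
    refine sum_congr rfl fun x hx => ?_
    have := hlt x hx
    split_ifs <;> omega
  have hsub := snd_map_outEdges_le hdef r
  have hle := Multiset.countP_le_of_le (· ≤ m) hsub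
  have hrep : Multiset.replicate #(outEdges E r) r = (outEdges E r).val.map fun _ => r :=
    (Multiset.map_const' _ _).symm
  have hadded : ((if i < r ∧ r ≤ n then {r} else 0 : Multiset ℤ).countP (· ≤ m) : ℤ)
      = addedShape i n m r := by
    unfold addedShape
    split_ifs <;> simp_all [Multiset.countP_eq_card_filter, Multiset.filter_singleton]
  simp only [card_def, filter_val, ← Multiset.countP_eq_card_filter] at hcross
  simp only [Multiset.countP_map, ← Multiset.countP_eq_card_filter] at hle
  simp only [shapeVec, shapeR, sigmaTab, Pi.add_apply, ← Multiset.countP_eq_card_filter,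
    Multiset.countP_add, Multiset.countP_sub hsub, Multiset.countP_map, hrep]
  push_cast [hle]
  linarith

end Shape

section Flows

lemma nuC_congr {F G : FlowGraph} {m : ℤ} (h : ∀ x : ℤ × ℤ, m < x.2 → (x ∈ F ↔ x ∈ G)) :
    nuC F m = nuC G m := by
  funext s
  unfold nuC
  congr 2
  ext x
  simp only [mem_filter]
  exact ⟨fun ⟨hx, hc⟩ => ⟨(h x hc.2.2).1 hx, hc⟩, fun ⟨hx, hc⟩ => ⟨(h x hc.2.2).2 hx, hc⟩⟩

lemma nuC_insert {G : FlowGraph} {e : ℤ × ℤ} {m : ℤ} (he : e ∉ G) (h1 : e.1 ≤ m) (h2 : m < e.2) :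
    nuC (insert e G) m = nuC G m + Pi.single e.1 1 := by
  funext s
  simp only [nuC, filter_insert, Pi.add_apply, Pi.single_apply]
  by_cases hs : e.1 = s
  · subst hs
    rw [if_pos ⟨rfl, h1, h2⟩, card_insert_of_notMem (mt (mem_of_mem_filter e) he), if_pos rfl]
    push_cast
    rfl
  · rw [if_neg fun h => hs h.1, if_neg (Ne.symm hs), add_zero]

variable {u v : List (ℤ × ℤ)} {e : ℤ × ℤ}

lemma descList_append_cons (hd : DescList (u ++ e :: v)) :
    (∀ x ∈ u, e.2 < x.2) ∧ ∀ x ∈ v, x.2 < e.2 := by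
  obtain ⟨-, hev, hu⟩ := List.pairwise_append.mp hd
  exact ⟨fun x hx => hu x hx e List.mem_cons_self, (List.pairwise_cons.mp hev).1⟩

lemma nuC_toFinset_of_snd_le (hd : DescList (u ++ e :: v)) {m : ℤ} (hm : e.2 ≤ m) :
    nuC (u ++ e :: v).toFinset m = nuC u.toFinset m := by
  obtain ⟨-, hv⟩ := descList_append_cons hd
  refine nuC_congr fun x hx => ?_
  simp only [List.mem_toFinset, List.mem_append, List.mem_cons]
  refine ⟨?_, Or.inl⟩
  rintro (hxu | rfl | hxv)
  · exact hxu
  · omega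
  · have := hv x hxv
    omega

lemma nuC_toFinset_of_snd_eq (hd : DescList (u ++ e :: v)) {M : ℤ} (hM : e.2 = M + 1)
    (he : e.1 ≤ M) : nuC (u ++ e :: v).toFinset M = nuC u.toFinset M + Pi.single e.1 1 := by
  obtain ⟨hu, hv⟩ := descList_append_cons hd
  have heu : e ∉ u.toFinset := fun h => (hu e (List.mem_toFinset.mp h)).false
  rw [← nuC_insert heu he (by omega)]
  refine nuC_congr fun x hx => ?_
  simp only [List.mem_toFinset, List.mem_append, List.mem_cons, mem_insert]
  refine ⟨?_, ?_⟩
  · rintro (hxu | rfl | hxv)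
    · exact Or.inr hxu
    · exact Or.inl rfl
    · have := hv x hxv
      omega
  · rintro (rfl | hxu)
    · exact Or.inr (Or.inl rfl)
    · exact Or.inl hxu

variable {A B : Finset ℤ} {E E' : FlowGraph}

lemma IsFlow.exists_source_le (hE : IsFlow E A B) {x : ℤ × ℤ} (hx : x ∈ E) :
    ∃ s ∈ A, s ≤ x.1 := by
  obtain ⟨y, hy, hmin⟩ := E.exists_min_image Prod.fst ⟨x, hx⟩
  refine ⟨y.1, ?_, hmin x hx⟩
  by_contra hA
  have hyb : y ∈ beginsAt E y.1 := mem_filter.mpr ⟨hy, rfl⟩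
  have hB : y.1 ∉ B := fun hB => by simp [hE.sink_out _ hB] at hyb
  -- as a transit point, `y.1` is the end of an edge, which begins before the minimum
  rcases hE.transit _ hA hB with ⟨h0, -⟩ | ⟨-, h1⟩
  · simp [h0] at hyb
  · obtain ⟨z, hz⟩ := card_eq_one.mp h1
    obtain ⟨hzE, hz2⟩ := mem_filter.mp (hz ▸ mem_singleton_self z : z ∈ endsAt E y.1)
    have := hE.edge_lt z hzE
    have := hmin z hzE
    omega

lemma InF.snd_le {q : ℕ} {i n : ℤ} {a b : Fin q → ℤ} (hE : InF i a b E) (hin : i ≤ n)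
    (hbn : ∀ j, b j ≤ n) {x : ℤ × ℤ} (hx : x ∈ E) : x.2 ≤ n := by
  by_cases hB : x.2 ∈ srcSet b
  · obtain ⟨j, -, hj⟩ := mem_image.mp hB
    exact hj ▸ hbn j
  · have hA : x.2 ∉ srcSet a := fun hA => by
      have hxe : x ∈ endsAt E x.2 := mem_filter.mpr ⟨hx, rfl⟩
      simp [hE.1.source_in _ hA] at hxe
    have := hE.2 x.2 (mem_sdiff.mpr ⟨mem_union_right _ (mem_image_of_mem _ hx), by simp [hA, hB]⟩)
    omega

/-- The first edges in which two flows with the same sources and sinks differ have the same end: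
otherwise the larger end `t` receives an edge in one flow and none in the other. -/
lemma snd_le_of_common_prefix (hE : IsFlow E A B) (hE' : IsFlow E' A B)
    {v' : List (ℤ × ℤ)} {e' : ℤ × ℤ} (hd : DescList (u ++ e :: v))
    (hd' : DescList (u ++ e' :: v')) (hEl : (u ++ e :: v).toFinset = E)
    (hE'l : (u ++ e' :: v').toFinset = E') : e.2 ≤ e'.2 := by
  by_contra! hlt
  obtain ⟨hu, hv⟩ := descList_append_cons hd
  obtain ⟨-, hv'⟩ := descList_append_cons hd'
  have hnone : endsAt E' e.2 = ∅ := by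
    refine filter_eq_empty_iff.mpr fun x hx hxe => ?_
    rw [← hE'l, List.mem_toFinset, List.mem_append, List.mem_cons] at hx
    rcases hx with hxu | rfl | hxv
    · exact (hu x hxu).ne hxe.symm
    · exact hlt.ne hxe
    · have := hv' x hxv
      omega
  have hend : e ∈ endsAt E e.2 := mem_filter.mpr ⟨hEl ▸ List.mem_toFinset.mpr (by simp), rfl⟩
  have hA : e.2 ∉ A := fun hA => by simp [hE.source_in _ hA] at hend
  have hB : e.2 ∉ B := fun hB => by simpa [hnone] using hE'.sink_in _ hB
  obtain ⟨f, hf⟩ : (beginsAt E e.2).Nonempty := by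
    rcases hE.transit _ hA hB with ⟨-, h0⟩ | ⟨h1, -⟩
    · simp [h0] at hend
    · exact card_pos.mp (by omega)
  obtain ⟨hfE, hf1⟩ := mem_filter.mp hf
  have hf2 := hE.edge_lt f hfE
  have hfu : f ∈ u := by
    rw [← hEl, List.mem_toFinset, List.mem_append, List.mem_cons] at hfE
    rcases hfE with hfu | rfl | hfv
    · exact hfu
    · omega
    · have := hv f hfv
      omega
  have hfb : f ∈ beginsAt E' e.2 :=
    mem_filter.mpr ⟨hE'l ▸ List.mem_toFinset.mpr (List.mem_append_left _ hfu), hf1⟩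
  rcases hE'.transit _ hA hB with ⟨h0, -⟩ | ⟨-, h1⟩
  · simp [h0] at hfb
  · simp [hnone] at h1

lemma exists_nuC_domLT_of_flowLt {q : ℕ} {i n : ℤ} {a b : Fin q → ℤ}
    (hbi : ∀ j, i < b j) (h1 : ∀ j, 1 ≤ a j) (h2 : ∀ j, b j ≤ n)
    (hE : InF i a b E) (hE' : IsFlow E' (srcSet a) (srcSet b)) (hlt : FlowLt E E') :
    ∃ M, 1 ≤ M ∧ M ≤ n ∧ DomLT (nuC E M) (nuC E' M) ∧ ∀ m, M < m → nuC E m = nuC E' m := by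
  obtain ⟨u, v, v', e, e', hd, hd', hEl, hE'l, hs⟩ := hlt
  have heE : e ∈ E := hEl ▸ List.mem_toFinset.mpr (by simp)
  have he'E : e' ∈ E' := hE'l ▸ List.mem_toFinset.mpr (by simp)
  have ht : e.2 = e'.2 := le_antisymm (snd_le_of_common_prefix hE.1 hE' hd hd' hEl hE'l)
    (snd_le_of_common_prefix hE' hE.1 hd' hd hE'l hEl)
  obtain ⟨s, hsA, hse'⟩ := hE'.exists_source_le he'E
  obtain ⟨j, -, rfl⟩ := mem_image.mp hsA
  have hen : e.2 ≤ n := hE.snd_le ((hbi j).le.trans (h2 j)) h2 heE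
  have := hE.1.edge_lt e heE
  have := hE'.edge_lt e' he'E
  have := h1 j
  refine ⟨e.2 - 1, by omega, by omega, ?_, fun m hm => ?_⟩
  · rw [← hEl, ← hE'l, nuC_toFinset_of_snd_eq hd (by omega) (by omega),
      nuC_toFinset_of_snd_eq hd' (by omega) (by omega)]
    exact domLT_add_single _ (by omega) hs
  · rw [← hEl, ← hE'l, nuC_toFinset_of_snd_le hd (by omega), nuC_toFinset_of_snd_le hd' (by omega)]

end Flows

theorem statement15_general {q : ℕ} (n i : ℤ) (a b : Fin q → ℤ)
    (hbi : ∀ j, i < b j)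
    (h1 : ∀ j, 1 ≤ a j) (h2 : ∀ j, b j ≤ n)
    (T S : ℤ → Multiset ℤ)
    (E E' : FlowGraph) (hE : InF i a b E) (hE' : InF i a b E')
    (hle : FlowLt E E' ∨ E = E')
    (hdefT : SigmaDefined E T) (hdefS : SigmaDefined E' S)
    (hσ : TabLE n (sigmaTab E' i n S) (sigmaTab E i n T)) :
    TabLE n S T ∧ (FlowLt E E' → TabLT n S T) := by
  have hν : ChainLE n (shapeVec S + nuC E') (shapeVec T + nuC E) := by
    rw [← chainLE_add_right_iff (z := addedShape i n), ← shapeVec_sigmaTab hdefS hE'.1.edge_lt,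
      ← shapeVec_sigmaTab hdefT hE.1.edge_lt]
    exact hσ
  have hlt : FlowLt E E' → TabLT n S T := fun hflow => by
    obtain ⟨M, hM, hMn, hdom, habove⟩ := exists_nuC_domLT_of_flowLt hbi h1 h2 hE hE'.1 hflow
    exact chainLT_of_chainLE_add hν hM hMn hdom fun m hm => (habove m hm).symm
  refine ⟨?_, hlt⟩
  rcases hle with hflow | rfl
  · exact Or.inl (hlt hflow)
  · exact chainLE_add_right_iff.mp hν

/-- Lemma 35: let `T`, `S` be regular row standard `lam`-tableaux and
`Γ ≤ Γ'` flows of `𝓕_i(a_1,…,a_q; b_1,…,b_q)` such that `σ_{Γ,i}(T)` and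
`σ_{Γ',i}(S)` are well-defined and `σ_{Γ',i}(S) ≤ σ_{Γ,i}(T)`. Then `S ≤ T`,
and moreover `S < T` if `Γ < Γ'`. -/
theorem statement15 {q : ℕ} (n i : ℤ) (a b : Fin q → ℤ)
    (ha : StrictMono a) (hb : StrictAnti b)
    (hai : ∀ j, a j ≤ i) (hbi : ∀ j, i < b j)
    (h1 : ∀ j, 1 ≤ a j) (h2 : ∀ j, b j ≤ n)
    (lam : ℤ → ℕ) (hlam : IsComposition n lam)
    (T S : ℤ → Multiset ℤ)
    (hT : IsRegularTab n lam T) (hS : IsRegularTab n lam S)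
    (E E' : FlowGraph) (hE : InF i a b E) (hE' : InF i a b E')
    (hle : FlowLt E E' ∨ E = E')
    (hdefT : SigmaDefined E T) (hdefS : SigmaDefined E' S)
    (hσ : TabLE n (sigmaTab E' i n S) (sigmaTab E i n T)) :
    TabLE n S T ∧ (FlowLt E E' → TabLT n S T) :=
  statement15_general n i a b hbi h1 h2 T S E E' hE hE' hle hdefT hdefS hσ
end
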